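/- arXiv:1507.00623 — 7 statements merged into one kernel-verified Lean document; each statement's English description precedes it below -/
import Mathlib

section
/- The set of AA-winning strategy profiles is rectangular: it equals the Cartesian product over players i of the sets Σ_i^{aa} = {σ_i : σ_i is part of some AA-winning profile}. In particular, if σ and σ' are both AA-winning profiles and i is any player, then (σ_i, σ'_{-i}) is also an AA-winning profile. -/
open scoped Classical

structure Arena (ι : Type) where
  State : Type
  Act : Type
  init : State
  owner : State → ι
  δ : State → Act → State

namespace Arena

variable {ι : Type} (A : Arena ι)

abbrev Strategy : Type := List A.State → A.Act

abbrev Profile : Type := ι → A.Strategy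

def stepsFrom (σ : A.Profile) (s : A.State) : ℕ → A.State × List A.State
  | 0 => (s, [s])
  | n + 1 =>
    let p := stepsFrom σ s n
    let t := A.δ p.1 (σ (A.owner p.1) p.2)
    (t, t :: p.2)

/-- The state reached after `n` steps when the profile `σ` is played from `s`. -/
def outcomeFrom (σ : A.Profile) (s : A.State) : ℕ → A.State :=
  fun n => (A.stepsFrom σ s n).1

/-- The outcome run of the profile `σ` from the initial state. -/
def outcome (σ : A.Profile) : ℕ → A.State :=
  A.outcomeFrom σ A.init

/-- The history (current state first) after `n` steps of `σ` from the initial state. -/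
def histAt (σ : A.Profile) (n : ℕ) : List A.State :=
  (A.stepsFrom σ A.init n).2

def IsRunFrom (s : A.State) (ρ : ℕ → A.State) : Prop :=
  ρ 0 = s ∧ ∀ n, ∃ a, A.δ (ρ n) a = ρ (n + 1)

end Arena

structure Game (ι : Type) extends Arena ι where
  obj : ι → Set (ℕ → toArena.State)

namespace Game

variable {ι : Type} [DecidableEq ι] (G : Game ι)

def Winning (i : ι) (σi : G.toArena.Strategy) : Prop :=
  ∀ σ : G.toArena.Profile, G.toArena.outcome (Function.update σ i σi) ∈ G.obj i

def Dominates (i : ι) (τ σi : G.toArena.Strategy) : Prop :=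
  (∀ σ : G.toArena.Profile,
      G.toArena.outcome (Function.update σ i σi) ∈ G.obj i →
      G.toArena.outcome (Function.update σ i τ) ∈ G.obj i) ∧
  (∃ σ : G.toArena.Profile,
      G.toArena.outcome (Function.update σ i τ) ∈ G.obj i ∧
      G.toArena.outcome (Function.update σ i σi) ∉ G.obj i)

def Admissible (i : ι) (σi : G.toArena.Strategy) : Prop :=
  ¬ ∃ τ, G.Dominates i τ σi

def Dominant (i : ι) (σi : G.toArena.Strategy) : Prop :=
  ∀ (τ : G.toArena.Strategy) (σ : G.toArena.Profile),
    G.toArena.outcome (Function.update σ i τ) ∈ G.obj i →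
    G.toArena.outcome (Function.update σ i σi) ∈ G.obj i

/-- Profile `σ` is assume-admissible winning: each `σ i` is admissible and wins `φ_i`
against every profile of admissible strategies of the other players. -/
def AAWinning (σ : G.toArena.Profile) : Prop :=
  ∀ i : ι, G.Admissible i (σ i) ∧
    ∀ σ' : G.toArena.Profile, (∀ j, j ≠ i → G.Admissible j (σ' j)) →
      G.toArena.outcome (Function.update σ' i (σ i)) ∈ G.obj i

def WinFrom (i : ι) (s : G.toArena.State) (σi : G.toArena.Strategy) : Prop :=
  ∀ σ : G.toArena.Profile,
    G.toArena.outcomeFrom (Function.update σ i σi) s ∈ G.obj i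

noncomputable def val (i : ι) (s : G.toArena.State) : ℤ :=
  if ∃ σi, G.WinFrom i s σi then 1
  else if ∀ σ : G.toArena.Profile, G.toArena.outcomeFrom σ s ∉ G.obj i then -1
  else 0

def Coop : Prop :=
  ∃ σ : G.toArena.Profile, ∀ i, G.toArena.outcome σ ∈ G.obj i

def AGand : Prop :=
  ∃ σ : G.toArena.Profile, (∀ i, G.toArena.outcome σ ∈ G.obj i) ∧
    ∀ (i : ι) (σ' : G.toArena.Profile),
      (∀ j, j ≠ i → G.toArena.outcome (Function.update σ' i (σ i)) ∈ G.obj j) →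
      G.toArena.outcome (Function.update σ' i (σ i)) ∈ G.obj i

def AGor : Prop :=
  ∃ σ : G.toArena.Profile, (∀ i, G.toArena.outcome σ ∈ G.obj i) ∧
    ∀ (i : ι) (σ' : G.toArena.Profile),
      (∃ j, j ≠ i ∧ G.toArena.outcome (Function.update σ' i (σ i)) ∈ G.obj j) →
      G.toArena.outcome (Function.update σ' i (σ i)) ∈ G.obj i

end Game

/-- States visited infinitely often by a run. -/
def infSet {S : Type} (ρ : ℕ → S) : Set S := {s | ∀ N, ∃ n, N ≤ n ∧ ρ n = s}

/-- The objectives are Muller conditions: they only depend on the set of states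
visited infinitely often. -/
def Game.IsMuller {ι : Type} (G : Game ι) : Prop :=
  ∀ (i : ι) (ρ ρ' : ℕ → G.toArena.State), infSet ρ = infSet ρ' →
    (ρ ∈ G.obj i ↔ ρ' ∈ G.obj i)

def PrefixIndep {S : Type} (φ : Set (ℕ → S)) : Prop :=
  ∀ ρ : ℕ → S, ρ ∈ φ ↔ (fun n => ρ (n + 1)) ∈ φ

/-- the set of AA-winning profiles is rectangular. -/
theorem stmt1 {ι : Type} [DecidableEq ι] (G : Game ι) :
    ({σ : G.toArena.Profile | G.AAWinning σ} =
      {σ : G.toArena.Profile | ∀ i : ι, ∃ τ : G.toArena.Profile, G.AAWinning τ ∧ τ i = σ i}) ∧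
    (∀ σ σ' : G.toArena.Profile, G.AAWinning σ → G.AAWinning σ' →
      ∀ i : ι, G.AAWinning (Function.update σ' i (σ i))) := by
  have key : ∀ (σ : G.toArena.Profile), G.AAWinning σ ↔
      ∀ i : ι, G.Admissible i (σ i) ∧
        ∀ σ' : G.toArena.Profile, (∀ j, j ≠ i → G.Admissible j (σ' j)) →
          G.toArena.outcome (Function.update σ' i (σ i)) ∈ G.obj i := fun _ => Iff.rfl
  constructor
  · ext σ
    simp only [Set.mem_setOf_eq]
    constructor
    · intro h i
      exact ⟨σ, h, rfl⟩
    · intro h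
      rw [key]
      intro i
      obtain ⟨τ, hτ, hτi⟩ := h i
      rw [← hτi]
      exact hτ i
  · intro σ σ' hσ hσ' i
    rw [key]
    intro j
    by_cases hji : j = i
    · subst hji
      simpa using hσ j
    · rw [Function.update_of_ne hji]
      exact hσ' j
end

section
/- In a two-player game, if player 2 has a winning strategy for φ_2 and player 1 has a strategy σ_1 such that every outcome of σ_1 satisfies φ_2 → φ_1 (Win-under-Hyp has a solution), then AA has a solution. -/
open scoped Classical

namespace AAx

variable {ι : Type} (A : Arena ι)

def stepsP (σ : A.Profile) (p : A.State × List A.State) : ℕ → A.State × List A.State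
  | 0 => p
  | n + 1 =>
    let q := stepsP σ p n
    let t := A.δ q.1 (σ (A.owner q.1) q.2)
    (t, t :: q.2)

lemma stepsP_succ (σ : A.Profile) (p : A.State × List A.State) (n : ℕ) :
    stepsP A σ p (n+1) =
      (A.δ (stepsP A σ p n).1 (σ (A.owner (stepsP A σ p n).1) (stepsP A σ p n).2),
        A.δ (stepsP A σ p n).1 (σ (A.owner (stepsP A σ p n).1) (stepsP A σ p n).2)
          :: (stepsP A σ p n).2) := rfl

lemma stepsFrom_eq_stepsP (σ : A.Profile) (s : A.State) :
    ∀ n, A.stepsFrom σ s n = stepsP A σ (s, [s]) n := by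
  intro n
  induction n with
  | zero => rfl
  | succ n ih => simp only [Arena.stepsFrom, stepsP, ih]

lemma stepsP_length (σ : A.Profile) (p : A.State × List A.State) :
    ∀ n, (stepsP A σ p n).2.length = p.2.length + n := by
  intro n
  induction n with
  | zero => simp [stepsP]
  | succ n ih => simp [stepsP_succ, ih]; omega

lemma stepsP_suffix (σ : A.Profile) (p : A.State × List A.State) :
    ∀ n, p.2 <:+ (stepsP A σ p n).2 := by
  intro n
  induction n with
  | zero => exact List.suffix_rfl
  | succ n ih => exact ih.trans (List.suffix_cons _ _)

lemma stepsP_add (σ : A.Profile) (p : A.State × List A.State) (m : ℕ) :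
    ∀ n, stepsP A σ p (m + n) = stepsP A σ (stepsP A σ p m) n := by
  intro n
  induction n with
  | zero => rfl
  | succ n ih => rw [show m + (n+1) = (m+n)+1 by omega, stepsP_succ, ih, stepsP_succ]

def pairOK (p : A.State × List A.State) : Prop := ∃ t, p.2 = p.1 :: t

lemma stepsP_ok (σ : A.Profile) (p : A.State × List A.State) (hp : pairOK A p) :
    ∀ n, pairOK A (stepsP A σ p n) := by
  intro n
  induction n with
  | zero => exact hp
  | succ n _ => exact ⟨(stepsP A σ p n).2, rfl⟩

lemma pairOK_headD {p : A.State × List A.State} (hp : pairOK A p) (d : A.State) :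
    p.2.headD d = p.1 := by
  obtain ⟨t, ht⟩ := hp; rw [ht]; rfl

lemma stepsP_drop (σ : A.Profile) (p : A.State × List A.State) :
    ∀ n m, m ≤ n → (stepsP A σ p n).2.drop (n - m) = (stepsP A σ p m).2 := by
  intro n
  induction n with
  | zero => intro m hm; interval_cases m; simp
  | succ n ih =>
    intro m hm
    rcases Nat.eq_or_lt_of_le hm with h | h
    · subst h; simp
    · have hm' : m ≤ n := by omega
      rw [stepsP_succ, show n + 1 - m = (n - m) + 1 by omega]
      simpa using ih m hm'

lemma stepsP_congr (σ σ' : A.Profile) (p : A.State × List A.State) (J : ℕ)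
    (h : ∀ j, j < J →
      A.δ (stepsP A σ' p j).1 (σ (A.owner (stepsP A σ' p j).1) (stepsP A σ' p j).2) =
      A.δ (stepsP A σ' p j).1 (σ' (A.owner (stepsP A σ' p j).1) (stepsP A σ' p j).2)) :
    ∀ j, j ≤ J → stepsP A σ p j = stepsP A σ' p j := by
  intro j
  induction j with
  | zero => intro _; rfl
  | succ j ih =>
    intro hj
    have hj' : j ≤ J := by omega
    rw [stepsP_succ, stepsP_succ, ih hj', h j (by omega)]

lemma suffix_eq_of_length {α : Type*} {l₁ l₂ t : List α} (h₁ : l₁ <:+ t) (h₂ : l₂ <:+ t)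
    (h : l₁.length = l₂.length) : l₁ = l₂ := by
  obtain ⟨u₁, rfl⟩ := h₁
  obtain ⟨u₂, h₂⟩ := h₂
  have hu : u₂.length = u₁.length := by
    have := congrArg List.length h₂
    simp at this; omega
  exact ((List.append_inj h₂ hu).2).symm

lemma region (σ : A.Profile) (p : A.State × List A.State) (e : List A.State) (L : ℕ)
    (hL : e.length = p.2.length + L) (hK : (stepsP A σ p L).2 ≠ e) :
    ∀ k, ¬ e <:+ (stepsP A σ p k).2 := by
  intro k hsuf
  have hlen := hsuf.length_le
  rw [stepsP_length] at hlen
  have hLk : L ≤ k := by omega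
  have hdrop := stepsP_drop A σ p k L hLk
  have hsuf2 : (stepsP A σ p L).2 <:+ (stepsP A σ p k).2 := by
    rw [← hdrop]; exact List.drop_suffix _ _
  exact hK (suffix_eq_of_length hsuf2 hsuf (by rw [stepsP_length, hL]))

end AAx
namespace AAx

section Glevel

variable (G : Game (Fin 2))

def pr (τ g : G.toArena.Strategy) : G.toArena.Profile := fun i => if i = 0 then τ else g

lemma pr_zero (τ g : G.toArena.Strategy) : pr G τ g 0 = τ := if_pos rfl

lemma pr_one (τ g : G.toArena.Strategy) : pr G τ g 1 = g := if_neg (by decide)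

lemma pr_ne (τ g : G.toArena.Strategy) {i : Fin 2} (h : ¬ i = 0) : pr G τ g i = g := if_neg h

lemma update_zero (σ : G.toArena.Profile) (τ : G.toArena.Strategy) :
    Function.update σ 0 τ = pr G τ (σ 1) := by
  funext j
  fin_cases j <;> simp [pr, Function.update_apply]

lemma update_one (σ : G.toArena.Profile) (g : G.toArena.Strategy) :
    Function.update σ 1 g = pr G (σ 0) g := by
  funext j
  fin_cases j <;> simp [pr, Function.update_apply]

def Wset (τ : G.toArena.Strategy) : Set (G.toArena.Strategy) :=
  {g | G.toArena.outcome (pr G τ g) ∈ G.obj 0}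

lemma dominates_zero_iff (τ σi : G.toArena.Strategy) :
    G.Dominates 0 τ σi ↔ (Wset G σi ⊆ Wset G τ ∧ ∃ g, g ∈ Wset G τ ∧ g ∉ Wset G σi) := by
  constructor
  · rintro ⟨hall, σw, hw1, hw2⟩
    refine ⟨fun g hg => ?_, σw 1, ?_, ?_⟩
    · have h := hall (pr G σi g)
      rw [update_zero, update_zero, pr_one] at h
      exact h hg
    · rw [update_zero] at hw1; exact hw1
    · rw [update_zero] at hw2; exact hw2
  · rintro ⟨hsub, g, hg1, hg2⟩
    refine ⟨fun σ h => ?_, pr G τ g, ?_, ?_⟩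
    · rw [update_zero] at h ⊢
      exact hsub h
    · rw [update_zero, pr_one]; exact hg1
    · rw [update_zero, pr_one]; exact hg2

lemma winning_admissible {κ : Type} [DecidableEq κ] (H : Game κ) (i : κ)
    (σi : H.toArena.Strategy) (h : H.Winning i σi) : H.Admissible i σi := by
  rintro ⟨τ, _, σw, _, hbad⟩
  exact hbad (h σw)

lemma admissible_one_winning (σ2 g : G.toArena.Strategy) (h2 : G.Winning 1 σ2)
    (hg : G.Admissible 1 g) : G.Winning 1 g := by
  by_contra hng
  simp only [Game.Winning, not_forall] at hng
  obtain ⟨σ0, hσ0⟩ := hng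
  exact hg ⟨σ2, fun σ _ => h2 σ, σ0, h2 σ0, hσ0⟩

def SF (τ g : G.toArena.Strategy) (n : ℕ) : G.toArena.State × List G.toArena.State :=
  stepsP G.toArena (pr G τ g) (G.toArena.init, [G.toArena.init]) n

lemma SF_ok (τ g : G.toArena.Strategy) (n : ℕ) : pairOK G.toArena (SF G τ g n) :=
  stepsP_ok _ _ _ ⟨[], rfl⟩ n

lemma SF_succ (τ g : G.toArena.Strategy) (n : ℕ) :
    SF G τ g (n+1) =
      (G.toArena.δ (SF G τ g n).1 (pr G τ g (G.toArena.owner (SF G τ g n).1) (SF G τ g n).2),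
        G.toArena.δ (SF G τ g n).1 (pr G τ g (G.toArena.owner (SF G τ g n).1) (SF G τ g n).2)
          :: (SF G τ g n).2) := rfl

lemma SF_len (τ g : G.toArena.Strategy) (n : ℕ) : (SF G τ g n).2.length = n + 1 := by
  rw [SF, stepsP_length]; simp; omega

lemma SF_head (τ g : G.toArena.Strategy) (n : ℕ) :
    (SF G τ g n).2.headD G.toArena.init = (SF G τ g n).1 :=
  pairOK_headD _ (SF_ok G τ g n) _

lemma SF_drop (τ g : G.toArena.Strategy) {n m : ℕ} (h : m ≤ n) :
    (SF G τ g n).2.drop (n - m) = (SF G τ g m).2 :=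
  stepsP_drop _ _ _ n m h

lemma SF_add (τ g : G.toArena.Strategy) (m j : ℕ) :
    SF G τ g (m + j) = stepsP G.toArena (pr G τ g) (SF G τ g m) j :=
  stepsP_add _ _ _ m j

lemma outcome_pr (τ g : G.toArena.Strategy) :
    G.toArena.outcome (pr G τ g) = fun n => (SF G τ g n).1 := by
  funext n
  show (G.toArena.stepsFrom (pr G τ g) G.toArena.init n).1 = _
  rw [stepsFrom_eq_stepsP]; rfl

lemma mem_Wset_iff (τ g : G.toArena.Strategy) :
    g ∈ Wset G τ ↔ (fun n => (SF G τ g n).1) ∈ G.obj 0 := by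
  rw [Wset, Set.mem_setOf_eq, outcome_pr]

def pL (l : List G.toArena.State) : G.toArena.State × List G.toArena.State :=
  (l.headD G.toArena.init, l)

lemma pL_SF (τ g : G.toArena.Strategy) (n : ℕ) : pL G (SF G τ g n).2 = SF G τ g n := by
  rw [pL, SF_head]

def RunOfL (l : List G.toArena.State) (w g : G.toArena.Strategy) : ℕ → G.toArena.State :=
  fun k => if k + 1 ≤ l.length then (l.drop (l.length - 1 - k)).headD G.toArena.init
           else (stepsP G.toArena (pr G w g) (pL G l) (k - (l.length - 1))).1

def WinContL (l : List G.toArena.State) : Prop := ∃ w, ∀ g, RunOfL G l w g ∈ G.obj 0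

def Kset (l : List G.toArena.State) : Set ℕ :=
  {m | m + 1 ≤ l.length ∧ WinContL G (l.drop (l.length - (m+1)))}

def ReachW (τ : G.toArena.Strategy) (l : List G.toArena.State) : Prop :=
  ∃ g n, (SF G τ g n).2 = l ∧ g ∈ Wset G τ

noncomputable def wwin (τd : G.toArena.Strategy) (l : List G.toArena.State) :
    G.toArena.Strategy :=
  if h : WinContL G l then h.choose else τd

lemma wwin_spec (τd : G.toArena.Strategy) (l : List G.toArena.State) (h : WinContL G l)
    (g : G.toArena.Strategy) : RunOfL G l (wwin G τd l) g ∈ G.obj 0 := by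
  rw [wwin, dif_pos h]; exact h.choose_spec g

noncomputable def tstar (τd : G.toArena.Strategy) {I : Type} (F : I → G.toArena.Strategy) :
    G.toArena.Strategy :=
  fun l =>
    if h1 : (Kset G l).Nonempty then wwin G τd (l.drop (l.length - (sInf (Kset G l) + 1))) l
    else if h2 : {i | ReachW G (F i) l}.Nonempty then F h2.some l
    else τd l

end Glevel

end AAx
namespace AAx

section Glevel2

variable (G : Game (Fin 2))

lemma step_head (τ g : G.toArena.Strategy) (n : ℕ) (l : List G.toArena.State)
    (hl : (SF G τ g n).2 = l) (j : ℕ) (hj : j < n) :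
    G.toArena.δ ((l.drop (n - j)).headD G.toArena.init)
      (pr G τ g (G.toArena.owner ((l.drop (n - j)).headD G.toArena.init)) (l.drop (n - j)))
      = (l.drop (n - (j+1))).headD G.toArena.init := by
  have d1 : (SF G τ g j).2 = l.drop (n - j) := by
    rw [← hl, SF_drop G τ g (le_of_lt hj)]
  have d2 : (SF G τ g (j+1)).2 = l.drop (n - (j+1)) := by
    rw [← hl, SF_drop G τ g (by omega : j + 1 ≤ n)]
  have h1 : (SF G τ g j).1 = (l.drop (n-j)).headD G.toArena.init := by
    rw [← SF_head, d1]
  have h2 : (SF G τ g (j+1)).1 = (l.drop (n-(j+1))).headD G.toArena.init := by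
    rw [← SF_head, d2]
  have hs := congrArg Prod.fst (SF_succ G τ g j)
  simp only at hs
  rw [h2, h1, d1] at hs
  exact hs.symm

lemma reach_trans (τa ga τb gb : G.toArena.Strategy) (n : ℕ) (l : List G.toArena.State)
    (hla : (SF G τa ga n).2 = l) (hlb : (SF G τb gb n).2 = l) :
    (SF G τa gb n).2 = l := by
  have main : SF G τa gb n = SF G τa ga n := by
    apply stepsP_congr G.toArena (pr G τa gb) (pr G τa ga) (G.toArena.init, [G.toArena.init]) n
      ?_ n le_rfl
    intro j hj
    change G.toArena.δ (SF G τa ga j).1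
        (pr G τa gb (G.toArena.owner (SF G τa ga j).1) (SF G τa ga j).2) =
      G.toArena.δ (SF G τa ga j).1
        (pr G τa ga (G.toArena.owner (SF G τa ga j).1) (SF G τa ga j).2)
    have d1 : (SF G τa ga j).2 = l.drop (n - j) := by
      rw [← hla, SF_drop G τa ga (le_of_lt hj)]
    have h1 : (SF G τa ga j).1 = (l.drop (n-j)).headD G.toArena.init := by
      rw [← SF_head, d1]
    rw [h1, d1]
    by_cases ho : G.toArena.owner ((l.drop (n-j)).headD G.toArena.init) = 0
    · rw [ho, pr_zero, pr_zero]
    · rw [pr_ne G τa gb ho, pr_ne G τa ga ho]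
      have hb := step_head G τb gb n l hlb j hj
      have ha := step_head G τa ga n l hla j hj
      rw [pr_ne G τb gb ho] at hb
      rw [pr_ne G τa ga ho] at ha
      rw [hb, ha]
  rw [main, hla]

end Glevel2

end AAx
namespace AAx

section Glevel3

variable (G : Game (Fin 2))

lemma factD (τ₁ τ₂ : G.toArena.Strategy) (l : List G.toArena.State) (n : ℕ)
    (hlen : l.length = n + 1)
    (howner : G.toArena.owner (l.headD G.toArena.init) = 0)
    (g₁ : G.toArena.Strategy) (h1r : (SF G τ₁ g₁ n).2 = l) (h1w : g₁ ∈ Wset G τ₁)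
    (g₂ : G.toArena.Strategy) (h2r : (SF G τ₂ g₂ n).2 = l)
    (hsub : Wset G τ₁ ⊆ Wset G τ₂)
    (hdiv : G.toArena.δ (l.headD G.toArena.init) (τ₂ l) ≠
            G.toArena.δ (l.headD G.toArena.init) (τ₁ l)) :
    WinContL G l := by
  classical
  refine ⟨τ₂, fun gg => ?_⟩
  set s := l.headD G.toArena.init with hs
  set c₂ := G.toArena.δ s (τ₂ l) with hc2
  set g' : G.toArena.Strategy := fun t => if (c₂ :: l) <:+ t then gg t else g₁ t with hg'
  -- (a) the τ₁-run against g' coincides with the one against g₁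
  have h1rs : (SF G τ₁ g₁ n).1 = s := by rw [← SF_head, h1r]
  have hstep1 : (SF G τ₁ g₁ (n+1)).2 = G.toArena.δ s (τ₁ l) :: l := by
    have := congrArg Prod.snd (SF_succ G τ₁ g₁ n)
    simp only at this
    rw [h1rs, h1r, howner, pr_zero] at this
    exact this
  have hne : (SF G τ₁ g₁ (n+1)).2 ≠ c₂ :: l := by
    rw [hstep1]
    intro h
    have := List.head_eq_of_cons_eq h
    exact hdiv this.symm
  have hreg : ∀ k, ¬ (c₂ :: l) <:+ (SF G τ₁ g₁ k).2 := by
    intro k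
    exact region G.toArena (pr G τ₁ g₁) (G.toArena.init, [G.toArena.init]) (c₂ :: l) (n+1)
      (by simp [hlen]; omega) hne k
  have ha : ∀ k, SF G τ₁ g' k = SF G τ₁ g₁ k := by
    intro k
    apply stepsP_congr G.toArena (pr G τ₁ g') (pr G τ₁ g₁) (G.toArena.init, [G.toArena.init]) k
      ?_ k le_rfl
    intro j _
    change G.toArena.δ (SF G τ₁ g₁ j).1
        (pr G τ₁ g' (G.toArena.owner (SF G τ₁ g₁ j).1) (SF G τ₁ g₁ j).2) =
      G.toArena.δ (SF G τ₁ g₁ j).1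
        (pr G τ₁ g₁ (G.toArena.owner (SF G τ₁ g₁ j).1) (SF G τ₁ g₁ j).2)
    by_cases ho : G.toArena.owner (SF G τ₁ g₁ j).1 = 0
    · rw [ho, pr_zero, pr_zero]
    · rw [pr_ne G τ₁ g' ho, pr_ne G τ₁ g₁ ho]
      have : g' (SF G τ₁ g₁ j).2 = g₁ (SF G τ₁ g₁ j).2 := by
        rw [hg']
        exact if_neg (hreg j)
      rw [this]
  have g'W : g' ∈ Wset G τ₂ := by
    apply hsub
    rw [mem_Wset_iff]
    have heq : (fun k => (SF G τ₁ g' k).1) = fun k => (SF G τ₁ g₁ k).1 :=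
      funext fun k => by rw [ha k]
    rw [heq]
    exact (mem_Wset_iff G τ₁ g₁).1 h1w
  -- (b) τ₂ reaches l against g₁
  have hb : (SF G τ₂ g₁ n).2 = l := reach_trans G τ₂ g₂ τ₁ g₁ n l h2r h1r
  -- (c) τ₂ reaches l against g'
  have hc : SF G τ₂ g' n = SF G τ₂ g₁ n := by
    apply stepsP_congr G.toArena (pr G τ₂ g') (pr G τ₂ g₁) (G.toArena.init, [G.toArena.init]) n
      ?_ n le_rfl
    intro j hj
    change G.toArena.δ (SF G τ₂ g₁ j).1
        (pr G τ₂ g' (G.toArena.owner (SF G τ₂ g₁ j).1) (SF G τ₂ g₁ j).2) =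
      G.toArena.δ (SF G τ₂ g₁ j).1
        (pr G τ₂ g₁ (G.toArena.owner (SF G τ₂ g₁ j).1) (SF G τ₂ g₁ j).2)
    by_cases ho : G.toArena.owner (SF G τ₂ g₁ j).1 = 0
    · rw [ho, pr_zero, pr_zero]
    · rw [pr_ne G τ₂ g' ho, pr_ne G τ₂ g₁ ho]
      have hsufn : ¬ (c₂ :: l) <:+ (SF G τ₂ g₁ j).2 := by
        intro hsuf
        have := hsuf.length_le
        rw [SF_len] at this
        simp [hlen] at this
        omega
      have : g' (SF G τ₂ g₁ j).2 = g₁ (SF G τ₂ g₁ j).2 := by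
        rw [hg']
        exact if_neg hsufn
      rw [this]
  have hcn : (SF G τ₂ g' n).2 = l := by rw [hc, hb]
  have hcn1 : (SF G τ₂ g' n).1 = s := by rw [← SF_head, hcn]
  -- (d) one more step reaches (c₂, c₂ :: l)
  have hd : SF G τ₂ g' (n+1) = (c₂, c₂ :: l) := by
    rw [SF_succ, hcn1, hcn, howner, pr_zero]
  -- (e) from (c₂, c₂ :: l) on, g' behaves like gg
  have he : ∀ j, stepsP G.toArena (pr G τ₂ gg) (c₂, c₂ :: l) j =
      stepsP G.toArena (pr G τ₂ g') (c₂, c₂ :: l) j := by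
    intro j
    apply stepsP_congr G.toArena (pr G τ₂ gg) (pr G τ₂ g') (c₂, c₂ :: l) j ?_ j le_rfl
    intro j' _
    by_cases ho : G.toArena.owner ((stepsP G.toArena (pr G τ₂ g') (c₂, c₂ :: l) j').1) = 0
    · rw [ho, pr_zero, pr_zero]
    · rw [pr_ne G τ₂ gg ho, pr_ne G τ₂ g' ho]
      have hsuf : (c₂ :: l) <:+ (stepsP G.toArena (pr G τ₂ g') (c₂, c₂ :: l) j').2 :=
        stepsP_suffix G.toArena (pr G τ₂ g') (c₂, c₂ :: l) j'
      have : g' (stepsP G.toArena (pr G τ₂ g') (c₂, c₂ :: l) j').2 =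
          gg (stepsP G.toArena (pr G τ₂ g') (c₂, c₂ :: l) j').2 := by
        rw [hg']
        exact if_pos hsuf
      rw [this]
  -- (f) assemble
  have hO : (fun k => (SF G τ₂ g' k).1) ∈ G.obj 0 := (mem_Wset_iff G τ₂ g').1 g'W
  have hEq : RunOfL G l τ₂ gg = fun k => (SF G τ₂ g' k).1 := by
    funext k
    simp only [RunOfL]
    by_cases hk : k + 1 ≤ l.length
    · rw [if_pos hk]
      have hk' : k ≤ n := by omega
      have hd2 : (SF G τ₂ g' k).2 = l.drop (n - k) := by
        rw [← hcn, SF_drop G _ _ hk']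
      rw [← SF_head, hd2, show l.length - 1 - k = n - k by omega]
    · rw [if_neg hk]
      rw [show k - (l.length - 1) = k - n by omega]
      have hR : SF G τ₂ g' k = stepsP G.toArena (pr G τ₂ g') (c₂, c₂ :: l) (k - (n+1)) := by
        conv_lhs => rw [show k = (n+1) + (k - (n+1)) by omega]
        rw [SF_add, hd]
      have hL1 : stepsP G.toArena (pr G τ₂ gg) (pL G l) (k - n) =
          stepsP G.toArena (pr G τ₂ gg) (stepsP G.toArena (pr G τ₂ gg) (pL G l) 1) (k - (n+1)) := by
        rw [← stepsP_add, show 1 + (k - (n+1)) = k - n by omega]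
      have hL2 : stepsP G.toArena (pr G τ₂ gg) (pL G l) 1 = (c₂, c₂ :: l) := by
        rw [stepsP_succ]
        have h0 : stepsP G.toArena (pr G τ₂ gg) (pL G l) 0 = pL G l := rfl
        rw [h0]
        have hp1 : (pL G l).1 = s := rfl
        have hp2 : (pL G l).2 = l := rfl
        rw [hp1, hp2, howner, pr_zero]
      rw [hL1, hL2, he (k - (n+1)), ← hR]
  rw [hEq]
  exact hO

end Glevel3

end AAx
namespace AAx

section Glevel4

variable (G : Game (Fin 2))

lemma tstar_wins (τd : G.toArena.Strategy) {I : Type} (F : I → G.toArena.Strategy)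
    (hchain : ∀ i j : I, Wset G (F i) ⊆ Wset G (F j) ∨ Wset G (F j) ⊆ Wset G (F i)) (α : I) :
    Wset G (F α) ⊆ Wset G (tstar G τd F) := by
  classical
  intro g hg
  set T := tstar G τd F with hTset
  have hTdef : ∀ l, T l = (if h1 : (Kset G l).Nonempty then
      wwin G τd (l.drop (l.length - (sInf (Kset G l) + 1))) l
    else if h2 : {i | ReachW G (F i) l}.Nonempty then F h2.some l
    else τd l) := fun l => rfl
  by_cases hA : ∃ n, (Kset G (SF G T g n).2).Nonempty
  · -- Case A : the run switches to a winning continuation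
    have hn₀ : (Kset G (SF G T g (sInf {n | (Kset G (SF G T g n).2).Nonempty})).2).Nonempty :=
      Nat.sInf_mem hA
    set n₀ := sInf {n | (Kset G (SF G T g n).2).Nonempty} with hn₀def
    have hmin : ∀ m, m < n₀ → ¬ (Kset G (SF G T g m).2).Nonempty := by
      intro m hm hmem
      exact Nat.notMem_of_lt_sInf hm hmem
    have hl₀len : (SF G T g n₀).2.length = n₀ + 1 := SF_len G T g n₀
    have wc₀ : WinContL G (SF G T g n₀).2 := by
      have hm1 := Nat.sInf_mem hn₀
      obtain ⟨hm1a, hm1b⟩ := hm1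
      rw [hl₀len] at hm1a
      by_cases hlt : sInf (Kset G (SF G T g n₀).2) < n₀
      · exfalso
        apply hmin _ hlt
        have hdropm : (SF G T g n₀).2.drop ((SF G T g n₀).2.length -
            (sInf (Kset G (SF G T g n₀).2) + 1)) = (SF G T g (sInf (Kset G (SF G T g n₀).2))).2 := by
          rw [show (SF G T g n₀).2.length - (sInf (Kset G (SF G T g n₀).2) + 1)
              = n₀ - sInf (Kset G (SF G T g n₀).2) by rw [hl₀len]; omega]
          exact SF_drop G T g (le_of_lt hlt)
        rw [hdropm] at hm1b
        refine ⟨sInf (Kset G (SF G T g n₀).2), ?_, ?_⟩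
        · rw [SF_len]
        · rw [show (SF G T g (sInf (Kset G (SF G T g n₀).2))).2.length -
              (sInf (Kset G (SF G T g n₀).2) + 1) = 0 by rw [SF_len]; omega, List.drop_zero]
          exact hm1b
      · have heq : sInf (Kset G (SF G T g n₀).2) = n₀ := by omega
        rw [heq, show (SF G T g n₀).2.length - (n₀ + 1) = 0 by rw [hl₀len]; omega, List.drop_zero]
          at hm1b
        exact hm1b
    have claim2 : ∀ j, T ((SF G T g (n₀ + j)).2) =
        wwin G τd (SF G T g n₀).2 ((SF G T g (n₀ + j)).2) := by
      intro j
      have hll : (SF G T g (n₀ + j)).2.length = n₀ + j + 1 := SF_len G T g _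
      have hdropj : (SF G T g (n₀ + j)).2.drop ((SF G T g (n₀ + j)).2.length - (n₀ + 1))
          = (SF G T g n₀).2 := by
        rw [show (SF G T g (n₀ + j)).2.length - (n₀ + 1) = (n₀ + j) - n₀ by rw [hll]; omega]
        exact SF_drop G T g (by omega)
      have hmem : n₀ ∈ Kset G (SF G T g (n₀ + j)).2 := by
        refine ⟨by rw [hll]; omega, ?_⟩
        rw [hdropj]; exact wc₀
      have hKl : (Kset G (SF G T g (n₀ + j)).2).Nonempty := ⟨n₀, hmem⟩
      have hinf : sInf (Kset G (SF G T g (n₀ + j)).2) = n₀ := by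
        have hle : sInf (Kset G (SF G T g (n₀ + j)).2) ≤ n₀ := Nat.sInf_le hmem
        rcases Nat.eq_or_lt_of_le hle with h | h
        · exact h
        · exfalso
          obtain ⟨hm2a, hm2b⟩ := Nat.sInf_mem hKl
          have hdrop2 : (SF G T g (n₀ + j)).2.drop ((SF G T g (n₀ + j)).2.length -
              (sInf (Kset G (SF G T g (n₀ + j)).2) + 1))
              = (SF G T g (sInf (Kset G (SF G T g (n₀ + j)).2))).2 := by
            rw [show (SF G T g (n₀ + j)).2.length - (sInf (Kset G (SF G T g (n₀ + j)).2) + 1)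
                = (n₀ + j) - sInf (Kset G (SF G T g (n₀ + j)).2) by rw [hll]; omega]
            exact SF_drop G T g (by omega)
          rw [hdrop2] at hm2b
          apply hmin _ h
          refine ⟨sInf (Kset G (SF G T g (n₀ + j)).2), by rw [SF_len], ?_⟩
          rw [show (SF G T g (sInf (Kset G (SF G T g (n₀ + j)).2))).2.length -
              (sInf (Kset G (SF G T g (n₀ + j)).2) + 1) = 0 by rw [SF_len]; omega, List.drop_zero]
          exact hm2b
      rw [hTdef, dif_pos hKl, hinf, hdropj]
    have hrun : ∀ j, stepsP G.toArena (pr G (wwin G τd (SF G T g n₀).2) g) (SF G T g n₀) j =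
        stepsP G.toArena (pr G T g) (SF G T g n₀) j := by
      intro j
      apply stepsP_congr _ _ _ _ j ?_ j le_rfl
      intro j' _
      have hq : stepsP G.toArena (pr G T g) (SF G T g n₀) j' = SF G T g (n₀ + j') :=
        (SF_add G T g n₀ j').symm
      rw [hq]
      by_cases ho : G.toArena.owner (SF G T g (n₀ + j')).1 = 0
      · rw [ho, pr_zero, pr_zero, claim2 j']
      · rw [pr_ne G _ g ho, pr_ne G _ g ho]
    rw [mem_Wset_iff]
    have hEq : (fun k => (SF G T g k).1) = RunOfL G (SF G T g n₀).2 (wwin G τd (SF G T g n₀).2) g := by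
      funext k
      simp only [RunOfL]
      by_cases hk : k + 1 ≤ (SF G T g n₀).2.length
      · rw [if_pos hk]
        have hk' : k ≤ n₀ := by rw [hl₀len] at hk; omega
        have hd2 : (SF G T g k).2 = (SF G T g n₀).2.drop (n₀ - k) := (SF_drop G T g hk').symm
        rw [← SF_head, hd2, show (SF G T g n₀).2.length - 1 - k = n₀ - k by rw [hl₀len]; omega]
      · rw [if_neg hk]
        rw [hl₀len] at hk
        rw [show k - ((SF G T g n₀).2.length - 1) = k - n₀ by rw [hl₀len]; omega]
        rw [pL_SF, hrun (k - n₀), ← SF_add, show n₀ + (k - n₀) = k by omega]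
    rw [hEq]
    exact wwin_spec G τd (SF G T g n₀).2 wc₀ g
  · -- Case B : the run coincides with the run of F α
    have key : ∀ k, SF G T g k = SF G (F α) g k := by
      intro k
      induction k with
      | zero => rfl
      | succ k ih =>
        rw [SF_succ, SF_succ, ih]
        suffices hδ : G.toArena.δ (SF G (F α) g k).1
            (pr G T g (G.toArena.owner (SF G (F α) g k).1) (SF G (F α) g k).2) =
            G.toArena.δ (SF G (F α) g k).1
            (pr G (F α) g (G.toArena.owner (SF G (F α) g k).1) (SF G (F α) g k).2) by
          rw [hδ]
        by_cases ho : G.toArena.owner (SF G (F α) g k).1 = 0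
        · rw [ho, pr_zero, pr_zero]
          have hKe : ¬ (Kset G (SF G (F α) g k).2).Nonempty := by
            intro h
            exact hA ⟨k, by rw [ih]; exact h⟩
          have hRe : {i | ReachW G (F i) (SF G (F α) g k).2}.Nonempty := ⟨α, g, k, rfl, hg⟩
          rw [hTdef, dif_neg hKe, dif_pos hRe]
          by_cases hδ2 : G.toArena.δ (SF G (F α) g k).1 (F hRe.some (SF G (F α) g k).2) =
              G.toArena.δ (SF G (F α) g k).1 (F α (SF G (F α) g k).2)
          · exact hδ2
          · exfalso
            obtain ⟨gγ, nγ, hγr, hγw⟩ := hRe.some_mem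
            have hlq : (SF G (F α) g k).2.length = k + 1 := SF_len G (F α) g k
            have hnγ : nγ = k := by
              have := SF_len G (F hRe.some) gγ nγ
              rw [hγr] at this
              omega
            rw [hnγ] at hγr
            have hhead : (SF G (F α) g k).2.headD G.toArena.init = (SF G (F α) g k).1 :=
              SF_head G (F α) g k
            have howq : G.toArena.owner ((SF G (F α) g k).2.headD G.toArena.init) = 0 := by
              rw [hhead]; exact ho
            have wc : WinContL G (SF G (F α) g k).2 := by
              rcases hchain hRe.some α with hch | hch
              · exact factD G (F hRe.some) (F α) (SF G (F α) g k).2 k hlq howq gγ hγr hγw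
                  g rfl hch (by rw [hhead]; exact fun h => hδ2 h.symm)
              · exact factD G (F α) (F hRe.some) (SF G (F α) g k).2 k hlq howq g rfl hg
                  gγ hγr hch (by rw [hhead]; exact hδ2)
            apply hKe
            refine ⟨k, by rw [hlq], ?_⟩
            rw [show (SF G (F α) g k).2.length - (k + 1) = 0 by rw [hlq]; omega, List.drop_zero]
            exact wc
        · rw [pr_ne G _ g ho, pr_ne G _ g ho]
    rw [mem_Wset_iff]
    have heq : (fun k => (SF G T g k).1) = fun k => (SF G (F α) g k).1 :=
      funext fun k => by rw [key k]
    rw [heq]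
    exact (mem_Wset_iff G (F α) g).1 hg

end Glevel4

end AAx
namespace AAx

section Glevel5

variable (G : Game (Fin 2))

lemma exists_admissible (σ0 : G.toArena.Strategy) :
    ∃ τs, Wset G σ0 ⊆ Wset G τs ∧ ∀ τ, Wset G τs ⊆ Wset G τ → Wset G τ ⊆ Wset G τs := by
  classical
  have hzorn := zorn_subset_nonempty
    {w : Set G.toArena.Strategy | (∃ τ, Wset G τ = w) ∧ Wset G σ0 ⊆ w} ?_
    (Wset G σ0) ⟨⟨σ0, rfl⟩, subset_rfl⟩
  · obtain ⟨m, hxm, hmax⟩ := hzorn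
    obtain ⟨⟨τs, hτ⟩, _⟩ := hmax.1
    refine ⟨τs, by rw [hτ]; exact hxm, ?_⟩
    intro τ hsub
    have hτS : Wset G τ ∈ {w : Set G.toArena.Strategy |
        (∃ τ', Wset G τ' = w) ∧ Wset G σ0 ⊆ w} := by
      refine ⟨⟨τ, rfl⟩, ?_⟩
      refine subset_trans ?_ hsub
      rw [hτ]; exact hxm
    have h2 := hmax.2 hτS (by rw [← hτ]; exact hsub)
    rw [← hτ] at h2
    exact h2
  · intro c hcS hchain hcne
    obtain ⟨w₀, hw₀⟩ := hcne
    have hFex : ∀ i : c, ∃ τ, Wset G τ = (i : Set G.toArena.Strategy) := fun i => (hcS i.2).1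
    set F : c → G.toArena.Strategy := fun i => (hFex i).choose with hF
    have hFspec : ∀ i : c, Wset G (F i) = (i : Set G.toArena.Strategy) :=
      fun i => (hFex i).choose_spec
    have hch : ∀ i j : c, Wset G (F i) ⊆ Wset G (F j) ∨ Wset G (F j) ⊆ Wset G (F i) := by
      intro i j
      rw [hFspec i, hFspec j]
      rcases eq_or_ne (i : Set G.toArena.Strategy) (j : Set G.toArena.Strategy) with h | h
      · rw [h]
        exact Or.inl subset_rfl
      · exact hchain.total i.2 j.2
    refine ⟨Wset G (tstar G σ0 F), ⟨⟨_, rfl⟩, ?_⟩, ?_⟩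
    · have h1 : Wset G σ0 ⊆ ((⟨w₀, hw₀⟩ : c) : Set G.toArena.Strategy) := (hcS hw₀).2
      rw [← hFspec ⟨w₀, hw₀⟩] at h1
      exact h1.trans (tstar_wins G σ0 F hch ⟨w₀, hw₀⟩)
    · intro s hs
      have h1 := tstar_wins G σ0 F hch ⟨s, hs⟩
      rw [hFspec ⟨s, hs⟩] at h1
      exact h1

end Glevel5

end AAx
/-- in a two-player game, if player 2 has a winning strategy for φ₂ and
Win-under-Hyp has a solution for player 1, then AA has a solution. -/
theorem stmt6 (G : Game (Fin 2))
    (h2 : ∃ σ2 : G.toArena.Strategy, G.Winning 1 σ2)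
    (h1 : ∃ σ1 : G.toArena.Strategy, ∀ σ : G.toArena.Profile,
      G.toArena.outcome (Function.update σ 0 σ1) ∈ G.obj 1 →
      G.toArena.outcome (Function.update σ 0 σ1) ∈ G.obj 0) :
    ∃ σ : G.toArena.Profile, G.AAWinning σ := by
  classical
  obtain ⟨σ2, hσ2⟩ := h2
  obtain ⟨σ1, hσ1⟩ := h1
  obtain ⟨τs, hsub0, hmax⟩ := AAx.exists_admissible G σ1
  refine ⟨AAx.pr G τs σ2, ?_⟩
  intro i
  fin_cases i
  · constructor
    · show G.Admissible 0 (AAx.pr G τs σ2 0)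
      rw [AAx.pr_zero]
      rintro ⟨τ, hdom⟩
      rw [AAx.dominates_zero_iff] at hdom
      obtain ⟨hsub, g, hg1, hg2⟩ := hdom
      exact hg2 (hmax τ hsub hg1)
    · intro σ' hadm
      have hadm1 : G.Admissible 1 (σ' 1) := hadm 1 (by decide)
      have hwin1 : G.Winning 1 (σ' 1) := AAx.admissible_one_winning G σ2 (σ' 1) hσ2 hadm1
      have hup0 : Function.update (AAx.pr G σ1 (σ' 1)) 0 σ1 = AAx.pr G σ1 (σ' 1) := by
        rw [AAx.update_zero, AAx.pr_one]
      have hup1 : Function.update (AAx.pr G σ1 (σ' 1)) 1 (σ' 1) = AAx.pr G σ1 (σ' 1) := by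
        rw [AAx.update_one, AAx.pr_zero]
      have hin1 : G.toArena.outcome (AAx.pr G σ1 (σ' 1)) ∈ G.obj 1 := by
        have h := hwin1 (AAx.pr G σ1 (σ' 1))
        rw [hup1] at h
        exact h
      have hmem : σ' 1 ∈ AAx.Wset G σ1 := by
        have h := hσ1 (AAx.pr G σ1 (σ' 1))
        rw [hup0] at h
        exact h hin1
      have hmem2 : σ' 1 ∈ AAx.Wset G τs := hsub0 hmem
      show G.toArena.outcome (Function.update σ' 0 (AAx.pr G τs σ2 0)) ∈ G.obj 0
      rw [show AAx.pr G τs σ2 0 = τs from AAx.pr_zero G τs σ2, AAx.update_zero]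
      exact hmem2
  · constructor
    · show G.Admissible 1 (AAx.pr G τs σ2 1)
      rw [AAx.pr_one]
      exact AAx.winning_admissible G 1 σ2 hσ2
    · intro σ' _
      show G.toArena.outcome (Function.update σ' 1 (AAx.pr G τs σ2 1)) ∈ G.obj 1
      rw [AAx.pr_one]
      exact hσ2 σ'
end

section
/- If a run ρ satisfies φ_i and player i never decreases their own value along any prefix of ρ, then there exists a strategy profile (σ_i, σ_{-i}) with σ_i admissible whose outcome is ρ. -/
open scoped Classical

namespace StmtAux

section BH
variable {S : Type}

def bh (f : ℕ → S) : ℕ → List S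
  | 0 => [f 0]
  | n+1 => f (n+1) :: bh f n

@[simp] lemma bh_length (f : ℕ → S) : ∀ n, (bh f n).length = n + 1
  | 0 => rfl
  | n+1 => by simp [bh, bh_length f n]

lemma bh_cons_tail (f : ℕ → S) (n : ℕ) : f n :: (bh f n).tail = bh f n := by
  cases n <;> rfl

lemma bh_ne_nil (f : ℕ → S) (n : ℕ) : bh f n ≠ [] := by cases n <;> simp [bh]

lemma bh_congr {f g : ℕ → S} : ∀ {n}, (∀ m ≤ n, f m = g m) → bh f n = bh g n
  | 0, h => by simp [bh, h 0 (le_refl 0)]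
  | n+1, h => by
      simp only [bh, h (n+1) (le_refl _)]
      exact congrArg _ (bh_congr fun m hm => h m (hm.trans (Nat.le_succ n)))

lemma bh_inj {f g : ℕ → S} : ∀ {n}, bh f n = bh g n → ∀ m ≤ n, f m = g m
  | 0, h, m, hm => by
      interval_cases m
      simpa [bh] using h
  | n+1, h, m, hm => by
      simp only [bh, List.cons.injEq] at h
      rcases Nat.lt_or_ge m (n+1) with h' | h'
      · exact bh_inj h.2 m (Nat.lt_succ_iff.mp h')
      · have : m = n + 1 := le_antisymm hm h'
        subst this; exact h.1

lemma bh_last (f : ℕ → S) : ∀ n, ∃ u, bh f n = u ++ [f 0]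
  | 0 => ⟨[], rfl⟩
  | n+1 => by
      obtain ⟨u, hu⟩ := bh_last f n
      exact ⟨f (n+1) :: u, by simp [bh, hu]⟩

lemma bh_suffix (f : ℕ → S) {d m : ℕ} (h : d ≤ m) : bh f d <:+ bh f m := by
  induction m with
  | zero => cases Nat.le_zero.mp h; exact List.suffix_rfl
  | succ m ih =>
      rcases Nat.lt_or_ge d (m+1) with h' | h'
      · exact (ih (Nat.lt_succ_iff.mp h')).trans (List.suffix_cons _ _)
      · have : d = m + 1 := le_antisymm h h'
        subst this; exact List.suffix_rfl

lemma suffix_eq_of_length {l₁ l₂ g : List S} (h₁ : l₁ <:+ g) (h₂ : l₂ <:+ g)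
    (h : l₁.length = l₂.length) : l₁ = l₂ := by
  obtain ⟨t₁, ht₁⟩ := h₁
  obtain ⟨t₂, ht₂⟩ := h₂
  have hts : t₁ ++ l₁ = t₂ ++ l₂ := ht₁.trans ht₂.symm
  have hl : t₁.length = t₂.length := by
    have := congrArg List.length hts
    simp at this; omega
  exact (List.append_inj hts hl).2

end BH

section ArenaAux

variable {ι : Type} (A : Arena ι)

lemma steps_snd (σ : A.Profile) (s : A.State) : ∀ n, (A.stepsFrom σ s n).2 = bh (A.outcomeFrom σ s) n
  | 0 => rfl
  | n+1 => by
      show _ = bh _ (n+1)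
      simp only [bh, ← steps_snd σ s n]
      rfl

lemma ofrom_zero (σ : A.Profile) (s : A.State) : A.outcomeFrom σ s 0 = s := rfl

lemma ofrom_succ (σ : A.Profile) (s : A.State) (n : ℕ) :
    A.outcomeFrom σ s (n+1) =
      A.δ (A.outcomeFrom σ s n) (σ (A.owner (A.outcomeFrom σ s n)) (bh (A.outcomeFrom σ s) n)) := by
  rw [← steps_snd]; rfl

def shiftP (σ : A.Profile) (c : List A.State) : A.Profile := fun j g => σ j (g ++ c.tail)

lemma shift_down (σ : A.Profile) (s : A.State) (m : ℕ) : ∀ k,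
    A.outcomeFrom (shiftP A σ (bh (A.outcomeFrom σ s) m)) (A.outcomeFrom σ s m) k
      = A.outcomeFrom σ s (m + k)
    ∧ bh (A.outcomeFrom (shiftP A σ (bh (A.outcomeFrom σ s) m)) (A.outcomeFrom σ s m)) k
        ++ (bh (A.outcomeFrom σ s) m).tail = bh (A.outcomeFrom σ s) (m + k)
  | 0 => ⟨rfl, by
      show [A.outcomeFrom σ s m] ++ _ = _
      simpa using bh_cons_tail (A.outcomeFrom σ s) m⟩
  | k+1 => by
      obtain ⟨h1, h2⟩ := shift_down σ s m k
      constructor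
      · rw [ofrom_succ, h1]
        simp only [shiftP]
        show A.δ _ (σ _ (_ ++ _)) = _
        rw [h2, ← ofrom_succ]
        rfl
      · show _ :: _ ++ _ = bh (A.outcomeFrom σ s) (m + (k+1))
        have : m + (k+1) = (m + k) + 1 := rfl
        rw [this]
        show _ :: (_ ++ _) = _ :: bh (A.outcomeFrom σ s) (m+k)
        rw [h2]
        congr 1
        rw [ofrom_succ, h1]
        simp only [shiftP]
        show A.δ _ (σ _ (_ ++ _)) = _
        rw [h2, ← ofrom_succ]

lemma agree (σ σ' : A.Profile) (s : A.State)
    (H : ∀ j k, σ j (bh (A.outcomeFrom σ' s) k) = σ' j (bh (A.outcomeFrom σ' s) k)) :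
    ∀ n, A.outcomeFrom σ s n = A.outcomeFrom σ' s n
      ∧ bh (A.outcomeFrom σ s) n = bh (A.outcomeFrom σ' s) n
  | 0 => ⟨rfl, rfl⟩
  | n+1 => by
      obtain ⟨h1, h2⟩ := agree σ σ' s H n
      have hs : A.outcomeFrom σ s (n+1) = A.outcomeFrom σ' s (n+1) := by
        rw [ofrom_succ, ofrom_succ, h1, h2, H]
      exact ⟨hs, by show _ :: _ = _ :: _; rw [hs, h2]⟩

noncomputable def cract (a₀ : A.Act) (r : ℕ → A.State) (n : ℕ) : A.Act :=
  if h : ∃ a, A.δ (r n) a = r (n+1) then h.choose else a₀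

lemma cract_spec (a₀ : A.Act) (r : ℕ → A.State) (n : ℕ) (h : ∃ a, A.δ (r n) a = r (n+1)) :
    A.δ (r n) (cract A a₀ r n) = r (n+1) := by
  simp only [cract]
  rw [dif_pos h]; exact h.choose_spec

end ArenaAux

end StmtAux

namespace StmtAux

variable {ι : Type} (A : Arena ι)

lemma shift1 (σf σg : A.Profile) (s : A.State)
    (hagree : ∀ (j : ι) (k : ℕ) (f : ℕ → A.State), f 0 = A.outcomeFrom σf s 1 →
      σf j (bh f k ++ [s]) = σg j (bh f k)) :
    ∀ k, A.outcomeFrom σf s (1 + k) = A.outcomeFrom σg (A.outcomeFrom σf s 1) k := by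
  intro k
  have hc : bh (A.outcomeFrom σf s) 1 = [A.outcomeFrom σf s 1, s] := by
    show [_, _] = _
    rw [ofrom_zero]
  have h2 := (shift_down A σf s 1 k).1
  rw [← h2]
  have := agree A (shiftP A σf (bh (A.outcomeFrom σf s) 1)) σg (A.outcomeFrom σf s 1) ?_
  · exact (this k).1
  · intro j k'
    simp only [shiftP, hc]
    exact hagree j k' _ rfl

end StmtAux
namespace StmtAux

section GameAux

variable {ι : Type} [DecidableEq ι] (G : Game ι) (i : ι)

def Wn (s : G.toArena.State) : Prop := ∃ w, G.WinFrom i s w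

def Cp (s : G.toArena.State) : Prop := ∃ σ : G.toArena.Profile, G.toArena.outcomeFrom σ s ∈ G.obj i

omit [DecidableEq ι] in
lemma shift_obj (hm : G.IsMuller) (f : ℕ → G.toArena.State) (m : ℕ) :
    f ∈ G.obj i ↔ (fun k => f (m + k)) ∈ G.obj i := by
  refine hm i f _ ?_
  ext s
  constructor
  · intro H N
    obtain ⟨n, hn, he⟩ := H (N + m)
    exact ⟨n - m, by omega, by show f (m + (n - m)) = s; rw [show m + (n - m) = n by omega]; exact he⟩
  · intro H N
    obtain ⟨n, hn, he⟩ := H N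
    exact ⟨m + n, by omega, he⟩

lemma val_one_of {s : G.toArena.State} (h : Wn G i s) : G.val i s = 1 :=
  if_pos (show ∃ w, G.WinFrom i s w from h)

lemma wn_of_val_one {s : G.toArena.State} (h : G.val i s = 1) : Wn G i s := by
  by_contra hc
  rw [Game.val, if_neg (show ¬ ∃ w, G.WinFrom i s w from hc)] at h
  split_ifs at h <;> omega

lemma val_le_one (s : G.toArena.State) : G.val i s ≤ 1 := by
  rw [Game.val]; split_ifs <;> omega

omit [DecidableEq ι] in
lemma visit_coop (hm : G.IsMuller) (σ : G.toArena.Profile) (s : G.toArena.State)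
    (h : G.toArena.outcomeFrom σ s ∈ G.obj i) (m : ℕ) :
    Cp G i (G.toArena.outcomeFrom σ s m) := by
  refine ⟨shiftP G.toArena σ (bh (G.toArena.outcomeFrom σ s) m), ?_⟩
  have he : G.toArena.outcomeFrom (shiftP G.toArena σ (bh (G.toArena.outcomeFrom σ s) m))
      (G.toArena.outcomeFrom σ s m) = fun k => G.toArena.outcomeFrom σ s (m + k) := by
    funext k; exact (shift_down G.toArena σ s m k).1
  rw [he, ← shift_obj G i hm _ m]
  exact h

lemma win_step_i (hm : G.IsMuller) {s s₂ : G.toArena.State} {a : G.toArena.Act}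
    (how : G.toArena.owner s = i) (hδ : G.toArena.δ s a = s₂)
    {w : G.toArena.Strategy} (hw : G.WinFrom i s₂ w) : Wn G i s := by
  refine ⟨fun g => if g.length = 1 then a else w g.dropLast, ?_⟩
  intro ς
  have h1 : G.toArena.outcomeFrom
      (Function.update ς i fun g => if g.length = 1 then a else w g.dropLast) s 1 = s₂ := by
    rw [ofrom_succ, ofrom_zero, how, Function.update_self]
    show G.toArena.δ s (if ([s] : List _).length = 1 then a else _) = s₂
    simpa using hδ
  have key := shift1 G.toArena
    (Function.update ς i fun g => if g.length = 1 then a else w g.dropLast)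
    (Function.update (fun j g => ς j (g ++ [s])) i w) s ?_
  · rw [shift_obj G i hm _ 1]
    have : (fun k => G.toArena.outcomeFrom
        (Function.update ς i fun g => if g.length = 1 then a else w g.dropLast) s (1 + k))
        = G.toArena.outcomeFrom (Function.update (fun j g => ς j (g ++ [s])) i w) s₂ := by
      funext k; rw [key k, h1]
    rw [this]
    exact hw _
  · intro j k f hf
    by_cases hj : j = i
    · subst hj
      rw [Function.update_self, Function.update_self]
      have hlen : (bh f k ++ [s]).length = k + 2 := by simp
      rw [if_neg (by omega), List.dropLast_concat]
    · rw [Function.update_of_ne hj, Function.update_of_ne hj]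

lemma win_step_o (hm : G.IsMuller) {s : G.toArena.State}
    (how : G.toArena.owner s ≠ i) (hs : Wn G i s) (a : G.toArena.Act) :
    Wn G i (G.toArena.δ s a) := by
  obtain ⟨w, hw⟩ := hs
  refine ⟨fun g => w (g ++ [s]), ?_⟩
  intro ς
  have h1 : G.toArena.outcomeFrom
      (Function.update (fun j g => if g.length = 1 then a else ς j g.dropLast) i w) s 1
      = G.toArena.δ s a := by
    rw [ofrom_succ, ofrom_zero, Function.update_of_ne how]
    show G.toArena.δ s (if ([s] : List _).length = 1 then a else _) = _
    simp
  have key := shift1 G.toArena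
    (Function.update (fun j g => if g.length = 1 then a else ς j g.dropLast) i w)
    (Function.update ς i (fun g => w (g ++ [s]))) s ?_
  · have hobj : G.toArena.outcomeFrom
        (Function.update (fun j g => if g.length = 1 then a else ς j g.dropLast) i w) s ∈ G.obj i :=
      hw _
    rw [shift_obj G i hm _ 1] at hobj
    have : (fun k => G.toArena.outcomeFrom
        (Function.update (fun j g => if g.length = 1 then a else ς j g.dropLast) i w) s (1 + k))
        = G.toArena.outcomeFrom (Function.update ς i (fun g => w (g ++ [s]))) (G.toArena.δ s a) := by
      funext k; rw [key k, h1]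
    rw [this] at hobj
    exact hobj
  · intro j k f hf
    by_cases hj : j = i
    · subst hj
      rw [Function.update_self, Function.update_self]
    · rw [Function.update_of_ne hj, Function.update_of_ne hj]
      have hlen : (bh f k ++ [s]).length = k + 2 := by simp
      rw [if_neg (by omega), List.dropLast_concat]

end GameAux

end StmtAux
namespace StmtAux

inductive Md (S Act : Type) where
  | path (k : ℕ)
  | fol (r : ℕ → S) (b : ℕ)
  | winm (w : List S → Act) (b : ℕ)
  | deado

section Constr

variable {ι : Type} [DecidableEq ι] (G : Game ι) (i : ι)
  (ρ : ℕ → G.toArena.State) (a₀ : G.toArena.Act)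

noncomputable def wstr (s : G.toArena.State) : G.toArena.Strategy :=
  if h : Wn G i s then h.choose else fun _ => a₀

lemma wstr_spec {s : G.toArena.State} (h : Wn G i s) : G.WinFrom i s (wstr G i a₀ s) := by
  rw [wstr, dif_pos h]; exact h.choose_spec

noncomputable def zeta (s : G.toArena.State) : ℕ → G.toArena.State :=
  if h : Cp G i s then G.toArena.outcomeFrom h.choose s
  else G.toArena.outcomeFrom (fun _ _ => a₀) s

lemma zeta_zero (s : G.toArena.State) : zeta G i a₀ s 0 = s := by
  rw [zeta]; split_ifs <;> rfl

lemma zeta_obj {s : G.toArena.State} (h : Cp G i s) : zeta G i a₀ s ∈ G.obj i := by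
  rw [zeta, dif_pos h]; exact h.choose_spec

lemma zeta_run (s : G.toArena.State) (n : ℕ) :
    ∃ a, G.toArena.δ (zeta G i a₀ s n) a = zeta G i a₀ s (n+1) := by
  rw [zeta]; split_ifs
  · exact ⟨_, (ofrom_succ _ _ _ _).symm⟩
  · exact ⟨_, (ofrom_succ _ _ _ _).symm⟩

noncomputable def fresh (s : G.toArena.State) (ℓ : ℕ) : Md G.toArena.State G.toArena.Act :=
  if Wn G i s then .winm (wstr G i a₀ s) ℓ
  else if Cp G i s then .fol (zeta G i a₀ s) ℓ
  else .deado

noncomputable def mode : List G.toArena.State → Md G.toArena.State G.toArena.Act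
  | [] => .deado
  | s :: t =>
    if s :: t = bh ρ t.length then .path t.length
    else
      match mode t with
      | .path _ => fresh G i a₀ s (t.length + 1)
      | .fol r b =>
          if s = r (t.length + 1 - b) then
            (if Wn G i s then .winm (wstr G i a₀ s) (t.length + 1) else .fol r b)
          else fresh G i a₀ s (t.length + 1)
      | .winm w b => .winm w b
      | .deado => .deado

noncomputable def sigA (h : List G.toArena.State) : G.toArena.Act :=
  match mode G i ρ a₀ h with
  | .path _ => cract G.toArena a₀ ρ (h.length - 1)
  | .fol r b => cract G.toArena a₀ r (h.length - b)
  | .winm w b => w (h.take (h.length - b + 1))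
  | .deado => a₀

lemma fresh_ne_path {s : G.toArena.State} {ℓ k : ℕ} :
    fresh G i a₀ s ℓ ≠ .path k := by
  rw [fresh]; split_ifs <;> simp

lemma mode_rho : ∀ n, mode G i ρ a₀ (bh ρ n) = .path n
  | 0 => by
      show mode G i ρ a₀ [ρ 0] = _
      rw [mode]
      simp only [List.length_nil]
      rw [if_pos (show [ρ 0] = bh ρ 0 from rfl)]
  | n+1 => by
      show mode G i ρ a₀ (ρ (n+1) :: bh ρ n) = _
      rw [mode, if_pos (show _ = bh ρ ((bh ρ n).length) by rw [bh_length]; rfl), bh_length]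

lemma mode_path_inv {h : List G.toArena.State} {k : ℕ} (hm : mode G i ρ a₀ h = .path k) :
    h = bh ρ k ∧ h.length = k + 1 := by
  match h with
  | [] => rw [mode] at hm; exact absurd hm (by simp)
  | s :: t =>
      rw [mode] at hm
      by_cases h1 : s :: t = bh ρ t.length
      · rw [if_pos h1] at hm
        cases hm
        exact ⟨h1, by simp⟩
      · rw [if_neg h1] at hm
        exfalso
        rcases hmt : mode G i ρ a₀ t with k' | ⟨r, b⟩ | ⟨w, b⟩ | _ <;> simp only [hmt] at hm
        · exact fresh_ne_path G i a₀ hm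
        · by_cases h2 : s = r (t.length + 1 - b)
          · rw [if_pos h2] at hm
            by_cases h3 : Wn G i s
            · rw [if_pos h3] at hm; cases hm
            · rw [if_neg h3] at hm; cases hm
          · rw [if_neg h2] at hm
            exact fresh_ne_path G i a₀ hm
        · cases hm
        · cases hm

lemma cons_rho_cases {s : G.toArena.State} {t : List G.toArena.State}
    (h : s :: t = bh ρ t.length) :
    (t = [] ∧ s = ρ 0) ∨ (∃ u, t.length = u + 1 ∧ t = bh ρ u ∧ s = ρ (u+1)) := by
  cases t with
  | nil =>
      left
      refine ⟨rfl, ?_⟩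
      have h' : s :: ([] : List G.toArena.State) = [ρ 0] := h
      simpa using h'
  | cons x t' =>
      right
      refine ⟨t'.length, by simp, ?_⟩
      simp only [List.length_cons] at h
      rw [show bh ρ (t'.length + 1) = ρ (t'.length + 1) :: bh ρ t'.length from rfl] at h
      simp only [List.cons.injEq] at h
      exact ⟨by simp [h.2], h.1⟩

lemma not_cons_rho {s : G.toArena.State} {t : List G.toArena.State}
    (h : mode G i ρ a₀ t ≠ .deado) (h2 : ∀ k, mode G i ρ a₀ t ≠ .path k) :
    s :: t ≠ bh ρ t.length := by
  intro hc
  rcases cons_rho_cases G ρ hc with ⟨ht, _⟩ | ⟨u, hu, ht, _⟩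
  · rw [ht] at h; rw [mode] at h; exact h rfl
  · rw [ht] at h2; exact h2 u (mode_rho G i ρ a₀ u)

lemma mode_cons_winm {s : G.toArena.State} {t : List G.toArena.State} {w b}
    (h : mode G i ρ a₀ t = .winm w b) : mode G i ρ a₀ (s :: t) = .winm w b := by
  rw [mode, if_neg (not_cons_rho G i ρ a₀ (by rw [h]; simp) (by intro k; rw [h]; simp)), h]

lemma mode_cons_deado {s : G.toArena.State} {t : List G.toArena.State}
    (h : mode G i ρ a₀ t = .deado) (hne : t ≠ []) : mode G i ρ a₀ (s :: t) = .deado := by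
  have hrho : s :: t ≠ bh ρ t.length := by
    intro hc
    rcases cons_rho_cases G ρ hc with ⟨ht, _⟩ | ⟨u, hu, ht, _⟩
    · exact hne ht
    · rw [ht, mode_rho] at h; simp at h
  rw [mode, if_neg hrho, h]

lemma mode_cons_fol {s : G.toArena.State} {t : List G.toArena.State} {r b}
    (h : mode G i ρ a₀ t = .fol r b) :
    mode G i ρ a₀ (s :: t) =
      (if s = r (t.length + 1 - b) then
        (if Wn G i s then .winm (wstr G i a₀ s) (t.length + 1) else .fol r b)
      else fresh G i a₀ s (t.length + 1)) := by
  rw [mode, if_neg (not_cons_rho G i ρ a₀ (by rw [h]; simp) (by intro k; rw [h]; simp)), h]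

lemma mode_cons_path {s : G.toArena.State} {t : List G.toArena.State} {k}
    (h : mode G i ρ a₀ t = .path k) (hne : s :: t ≠ bh ρ t.length) :
    mode G i ρ a₀ (s :: t) = fresh G i a₀ s (t.length + 1) := by
  rw [mode, if_neg hne, h]

end Constr

end StmtAux
namespace StmtAux

section Invar

variable {ι : Type} [DecidableEq ι] (G : Game ι) (i : ι)
  (ρ : ℕ → G.toArena.State) (a₀ : G.toArena.Act)

lemma fresh_eq_winm {s : G.toArena.State} {ℓ b : ℕ} {w}
    (h : fresh G i a₀ s ℓ = .winm w b) : Wn G i s ∧ w = wstr G i a₀ s ∧ b = ℓ := by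
  rw [fresh] at h
  by_cases h1 : Wn G i s
  · rw [if_pos h1] at h; cases h; exact ⟨h1, rfl, rfl⟩
  · rw [if_neg h1] at h
    by_cases h2 : Cp G i s
    · rw [if_pos h2] at h; cases h
    · rw [if_neg h2] at h; cases h

lemma fresh_eq_fol {s : G.toArena.State} {ℓ b : ℕ} {r}
    (h : fresh G i a₀ s ℓ = .fol r b) :
    ¬ Wn G i s ∧ Cp G i s ∧ r = zeta G i a₀ s ∧ b = ℓ := by
  rw [fresh] at h
  by_cases h1 : Wn G i s
  · rw [if_pos h1] at h; cases h
  · rw [if_neg h1] at h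
    by_cases h2 : Cp G i s
    · rw [if_pos h2] at h; cases h; exact ⟨h1, h2, rfl, rfl⟩
    · rw [if_neg h2] at h; cases h

lemma fresh_eq_deado {s : G.toArena.State} {ℓ : ℕ}
    (h : fresh G i a₀ s ℓ = .deado) : ¬ Wn G i s ∧ ¬ Cp G i s := by
  rw [fresh] at h
  by_cases h1 : Wn G i s
  · rw [if_pos h1] at h; cases h
  · rw [if_neg h1] at h
    by_cases h2 : Cp G i s
    · rw [if_pos h2] at h; cases h
    · exact ⟨h1, h2⟩

lemma mode_single (s : G.toArena.State) :
    mode G i ρ a₀ [s] = if ([s] : List G.toArena.State) = bh ρ 0 then .path 0 else .deado := by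
  rw [mode]
  simp only [List.length_nil]
  by_cases h1 : ([s] : List G.toArena.State) = bh ρ 0
  · rw [if_pos h1, if_pos h1]
  · rw [if_neg h1, if_neg h1]
    rfl

lemma winm_inv (f : ℕ → G.toArena.State) :
    ∀ n {w b}, mode G i ρ a₀ (bh f n) = .winm w b →
      ∃ m, m ≤ n ∧ b = m + 1 ∧ w = wstr G i a₀ (f m) ∧ Wn G i (f m) ∧
        mode G i ρ a₀ (bh f m) = .winm w b := by
  intro n
  induction n with
  | zero =>
      intro w b h
      rw [show bh f 0 = [f 0] from rfl, mode_single] at h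
      split_ifs at h <;> cases h
  | succ n ih =>
      intro w b h
      have hcons : bh f (n+1) = f (n+1) :: bh f n := rfl
      rcases hmt : mode G i ρ a₀ (bh f n) with k' | ⟨r', b'⟩ | ⟨w', b'⟩ | _
      · by_cases hr : f (n+1) :: bh f n = bh ρ (bh f n).length
        · rw [hcons, mode, if_pos hr] at h; cases h
        · rw [hcons, mode_cons_path G i ρ a₀ hmt hr] at h
          obtain ⟨h1, h2, h3⟩ := fresh_eq_winm G i a₀ h
          exact ⟨n+1, le_refl _, by rw [h3, bh_length], h2, h1,
            by rw [hcons, mode_cons_path G i ρ a₀ hmt hr]; exact h⟩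
      · rw [hcons, mode_cons_fol G i ρ a₀ hmt] at h
        by_cases h2 : f (n+1) = r' ((bh f n).length + 1 - b')
        · rw [if_pos h2] at h
          by_cases h3 : Wn G i (f (n+1))
          · rw [if_pos h3] at h
            cases h
            exact ⟨n+1, le_refl _, by rw [bh_length], rfl, h3,
              by rw [hcons, mode_cons_fol G i ρ a₀ hmt, if_pos h2, if_pos h3]⟩
          · rw [if_neg h3] at h; cases h
        · rw [if_neg h2] at h
          obtain ⟨h1', h2', h3'⟩ := fresh_eq_winm G i a₀ h
          exact ⟨n+1, le_refl _, by rw [h3', bh_length], h2', h1',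
            by rw [hcons, mode_cons_fol G i ρ a₀ hmt, if_neg h2]; exact h⟩
      · rw [hcons, mode_cons_winm G i ρ a₀ hmt] at h
        cases h
        obtain ⟨m, hm1, hm2, hm3, hm4, hm5⟩ := ih hmt
        exact ⟨m, hm1.trans (Nat.le_succ n), hm2, hm3, hm4, hm5⟩
      · rw [hcons, mode_cons_deado G i ρ a₀ hmt (bh_ne_nil f n)] at h; cases h

lemma deado_inv (f : ℕ → G.toArena.State) (h0 : f 0 = ρ 0) :
    ∀ n, mode G i ρ a₀ (bh f n) = .deado → ∃ m, m ≤ n ∧ ¬ Cp G i (f m) := by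
  intro n
  induction n with
  | zero =>
      intro h
      rw [show bh f 0 = [f 0] from rfl, h0] at h
      rw [show ([ρ 0] : List G.toArena.State) = bh ρ 0 from rfl, mode_rho] at h
      cases h
  | succ n ih =>
      intro h
      have hcons : bh f (n+1) = f (n+1) :: bh f n := rfl
      rcases hmt : mode G i ρ a₀ (bh f n) with k' | ⟨r', b'⟩ | ⟨w', b'⟩ | _
      · by_cases hr : f (n+1) :: bh f n = bh ρ (bh f n).length
        · rw [hcons, mode, if_pos hr] at h; cases h
        · rw [hcons, mode_cons_path G i ρ a₀ hmt hr] at h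
          exact ⟨n+1, le_refl _, (fresh_eq_deado G i a₀ h).2⟩
      · rw [hcons, mode_cons_fol G i ρ a₀ hmt] at h
        by_cases h2 : f (n+1) = r' ((bh f n).length + 1 - b')
        · rw [if_pos h2] at h
          by_cases h3 : Wn G i (f (n+1))
          · rw [if_pos h3] at h; cases h
          · rw [if_neg h3] at h; cases h
        · rw [if_neg h2] at h
          exact ⟨n+1, le_refl _, (fresh_eq_deado G i a₀ h).2⟩
      · rw [hcons, mode_cons_winm G i ρ a₀ hmt] at h; cases h
      · obtain ⟨m, hm1, hm2⟩ := ih hmt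
        exact ⟨m, hm1.trans (Nat.le_succ n), hm2⟩

lemma fol_inv (f : ℕ → G.toArena.State) :
    ∀ n {r b}, mode G i ρ a₀ (bh f n) = .fol r b →
      1 ≤ b ∧ b ≤ n + 1 ∧ r = zeta G i a₀ (f (b-1)) ∧ Cp G i (f (b-1)) ∧
        ∀ m, b - 1 ≤ m → m ≤ n → (f m = r (m - (b-1)) ∧ ¬ Wn G i (f m)) := by
  intro n
  induction n with
  | zero =>
      intro r b h
      rw [show bh f 0 = [f 0] from rfl, mode_single] at h
      split_ifs at h <;> cases h
  | succ n ih =>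
      intro r b h
      have hcons : bh f (n+1) = f (n+1) :: bh f n := rfl
      rcases hmt : mode G i ρ a₀ (bh f n) with k' | ⟨r', b'⟩ | ⟨w', b'⟩ | _
      · by_cases hr : f (n+1) :: bh f n = bh ρ (bh f n).length
        · rw [hcons, mode, if_pos hr] at h; cases h
        · rw [hcons, mode_cons_path G i ρ a₀ hmt hr] at h
          obtain ⟨h1, h2, h3, h4⟩ := fresh_eq_fol G i a₀ h
          rw [bh_length] at h4
          refine ⟨by omega, by omega, by simp only [h4, Nat.add_sub_cancel]; exact h3, by simp only [h4, Nat.add_sub_cancel]; exact h2, ?_⟩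
          intro m hm1 hm2
          have : m = n + 1 := by omega
          subst this
          constructor
          · rw [h3, h4]
            show f (n+1) = zeta G i a₀ (f (n+1)) ((n+1) - (n+2-1))
            rw [show (n+1) - (n+2-1) = 0 by omega, zeta_zero]
          · exact h1
      · rw [hcons, mode_cons_fol G i ρ a₀ hmt] at h
        by_cases h2 : f (n+1) = r' ((bh f n).length + 1 - b')
        · rw [if_pos h2] at h
          by_cases h3 : Wn G i (f (n+1))
          · rw [if_pos h3] at h; cases h
          · rw [if_neg h3] at h
            cases h
            obtain ⟨g1, g2, g3, g4, g5⟩ := ih hmt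
            refine ⟨g1, g2.trans (Nat.le_succ _), g3, g4, ?_⟩
            intro m hm1 hm2
            rcases Nat.lt_or_ge m (n+1) with hl | hl
            · exact g5 m hm1 (by omega)
            · have : m = n + 1 := by omega
              subst this
              rw [bh_length] at h2
              refine ⟨?_, h3⟩
              rw [h2]
              congr 1
              omega
        · rw [if_neg h2] at h
          obtain ⟨h1, h2', h3, h4⟩ := fresh_eq_fol G i a₀ h
          rw [bh_length] at h4
          refine ⟨by omega, by omega, by simp only [h4, Nat.add_sub_cancel]; exact h3, by simp only [h4, Nat.add_sub_cancel]; exact h2', ?_⟩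
          intro m hm1 hm2
          have : m = n + 1 := by omega
          subst this
          constructor
          · rw [h3, h4]
            show f (n+1) = zeta G i a₀ (f (n+1)) ((n+1) - (n+2-1))
            rw [show (n+1) - (n+2-1) = 0 by omega, zeta_zero]
          · exact h1
      · rw [hcons, mode_cons_winm G i ρ a₀ hmt] at h; cases h
      · rw [hcons, mode_cons_deado G i ρ a₀ hmt (bh_ne_nil f n)] at h; cases h

lemma winm_ext {c : List G.toArena.State} {w b} (hc : mode G i ρ a₀ c = .winm w b)
    (f : ℕ → G.toArena.State) (hf : f 0 :: c.tail = c) :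
    ∀ k, mode G i ρ a₀ (bh f k ++ c.tail) = .winm w b := by
  intro k
  induction k with
  | zero => rw [show bh f 0 ++ c.tail = f 0 :: c.tail from rfl, hf]; exact hc
  | succ k ih =>
      show mode G i ρ a₀ (f (k+1) :: (bh f k ++ c.tail)) = _
      exact mode_cons_winm G i ρ a₀ ih

lemma sig_winm {h : List G.toArena.State} {w b} (hm : mode G i ρ a₀ h = .winm w b) :
    sigA G i ρ a₀ h = w (h.take (h.length - b + 1)) := by
  rw [sigA, hm]

lemma sig_fol {h : List G.toArena.State} {r b} (hm : mode G i ρ a₀ h = .fol r b) :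
    sigA G i ρ a₀ h = cract G.toArena a₀ r (h.length - b) := by
  rw [sigA, hm]

lemma sig_path {h : List G.toArena.State} {k} (hm : mode G i ρ a₀ h = .path k) :
    sigA G i ρ a₀ h = cract G.toArena a₀ ρ (h.length - 1) := by
  rw [sigA, hm]

lemma embed_win (hm : G.IsMuller) (σf : G.toArena.Profile) (s₀ : G.toArena.State) (m : ℕ)
    (w : G.toArena.Strategy)
    (hiw : ∀ (f : ℕ → G.toArena.State), f 0 = G.toArena.outcomeFrom σf s₀ m → ∀ k,
      σf i (bh f k ++ (bh (G.toArena.outcomeFrom σf s₀) m).tail) = w (bh f k))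
    (hw : G.WinFrom i (G.toArena.outcomeFrom σf s₀ m) w) :
    G.toArena.outcomeFrom σf s₀ ∈ G.obj i := by
  have key := agree G.toArena (shiftP G.toArena σf (bh (G.toArena.outcomeFrom σf s₀) m))
      (Function.update (shiftP G.toArena σf (bh (G.toArena.outcomeFrom σf s₀) m)) i w)
      (G.toArena.outcomeFrom σf s₀ m) ?_
  · have hobj := hw (shiftP G.toArena σf (bh (G.toArena.outcomeFrom σf s₀) m))
    rw [shift_obj G i hm _ m]
    have heq : (fun k => G.toArena.outcomeFrom σf s₀ (m + k)) = G.toArena.outcomeFrom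
        (Function.update (shiftP G.toArena σf (bh (G.toArena.outcomeFrom σf s₀) m)) i w)
        (G.toArena.outcomeFrom σf s₀ m) := by
      funext k
      rw [← (shift_down G.toArena σf s₀ m k).1, (key k).1]
    rw [heq]
    exact hobj
  · intro j k
    by_cases hj : j = i
    · rw [hj, Function.update_self]
      show σf i (_ ++ _) = _
      rw [hiw _ rfl k]
    · rw [Function.update_of_ne hj]

lemma winm_wins (hm : G.IsMuller) (ς : G.toArena.Profile) (s₀ : G.toArena.State) {n w b}
    (h : mode G i ρ a₀
      (bh (G.toArena.outcomeFrom (Function.update ς i (sigA G i ρ a₀)) s₀) n) = .winm w b) :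
    G.toArena.outcomeFrom (Function.update ς i (sigA G i ρ a₀)) s₀ ∈ G.obj i := by
  obtain ⟨m, hmn, hb, hwe, hWn, hmode⟩ := winm_inv G i ρ a₀ _ n h
  refine embed_win G i hm _ s₀ m w ?_ ?_
  · intro f hf k
    rw [Function.update_self]
    have hmode' : mode G i ρ a₀
        (bh f k ++ (bh (G.toArena.outcomeFrom (Function.update ς i (sigA G i ρ a₀)) s₀) m).tail)
        = .winm w b :=
      winm_ext G i ρ a₀ hmode f (by rw [hf]; exact bh_cons_tail _ m) k
    rw [sig_winm G i ρ a₀ hmode']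
    have hlen : (bh f k ++ (bh (G.toArena.outcomeFrom
        (Function.update ς i (sigA G i ρ a₀)) s₀) m).tail).length = k + 1 + m := by
      simp [List.length_append, List.length_tail]
    rw [hlen, hb, show k + 1 + m - (m + 1) + 1 = k + 1 by omega]
    congr 1
    rw [show k + 1 = (bh f k).length from (bh_length f k).symm]
    exact List.take_left
  · rw [hwe]
    exact wstr_spec G i a₀ hWn

end Invar

end StmtAux
namespace StmtAux

section MainHelp

variable {ι : Type} [DecidableEq ι] (G : Game ι) (i : ι)
  (ρ : ℕ → G.toArena.State) (a₀ : G.toArena.Act)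

lemma agree_below (σ σ' : G.toArena.Profile) (s : G.toArena.State) (d : ℕ)
    (hag : ∀ j g, g.length ≤ d → σ j g = σ' j g) :
    ∀ m, m ≤ d → G.toArena.outcomeFrom σ s m = G.toArena.outcomeFrom σ' s m := by
  have key : ∀ m, m ≤ d → G.toArena.outcomeFrom σ s m = G.toArena.outcomeFrom σ' s m ∧
      bh (G.toArena.outcomeFrom σ s) m = bh (G.toArena.outcomeFrom σ' s) m := by
    intro m
    induction m with
    | zero => exact fun _ => ⟨rfl, rfl⟩
    | succ m ih =>
        intro hm
        obtain ⟨h1, h2⟩ := ih (by omega)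
        have hst : G.toArena.outcomeFrom σ s (m+1) = G.toArena.outcomeFrom σ' s (m+1) := by
          rw [ofrom_succ, ofrom_succ, h1, h2, hag _ _ (by rw [bh_length]; omega)]
        refine ⟨hst, ?_⟩
        show _ :: _ = _ :: _
        rw [hst, h2]
  exact fun m hm => (key m hm).1

lemma out_eq (hrun : G.toArena.IsRunFrom G.toArena.init ρ) :
    ∀ n, G.toArena.outcomeFrom
      (Function.update (fun _ g => cract G.toArena a₀ ρ (g.length - 1)) i (sigA G i ρ a₀))
      G.toArena.init n = ρ n := by
  have key : ∀ n, (∀ m, m ≤ n → G.toArena.outcomeFrom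
      (Function.update (fun _ g => cract G.toArena a₀ ρ (g.length - 1)) i (sigA G i ρ a₀))
      G.toArena.init m = ρ m) := by
    intro n
    induction n with
    | zero =>
        intro m hm
        interval_cases m
        exact hrun.1.symm
    | succ n ih =>
        intro m hm
        rcases Nat.lt_or_ge m (n+1) with h | h
        · exact ih m (by omega)
        · have hmn : m = n + 1 := by omega
          subst hmn
          have hbh : bh (G.toArena.outcomeFrom
              (Function.update (fun _ g => cract G.toArena a₀ ρ (g.length - 1)) i (sigA G i ρ a₀))
              G.toArena.init) n = bh ρ n := bh_congr ih
          rw [ofrom_succ, ih n (le_refl n), hbh]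
          have hact : ∀ j, (Function.update (fun _ g => cract G.toArena a₀ ρ (g.length - 1)) i
              (sigA G i ρ a₀)) j (bh ρ n) = cract G.toArena a₀ ρ n := by
            intro j
            by_cases hj : j = i
            · rw [hj, Function.update_self, sig_path G i ρ a₀ (mode_rho G i ρ a₀ n), bh_length]
              norm_num
            · rw [Function.update_of_ne hj, bh_length]
              norm_num
          rw [hact]
          exact cract_spec G.toArena a₀ ρ n (hrun.2 n)
  exact fun n => key n n (le_refl n)

lemma path_win (hm : G.IsMuller) (hrun : G.toArena.IsRunFrom G.toArena.init ρ)
    (hwin : ρ ∈ G.obj i)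
    (hval : ∀ n, G.toArena.owner (ρ n) = i → G.val i (ρ n) ≤ G.val i (ρ (n + 1)))
    (ς : G.toArena.Profile) (d : ℕ)
    (hagree : ∀ m, m ≤ d → G.toArena.outcomeFrom
      (Function.update ς i (sigA G i ρ a₀)) G.toArena.init m = ρ m)
    (hWd : Wn G i (ρ d)) :
    G.toArena.outcomeFrom (Function.update ς i (sigA G i ρ a₀)) G.toArena.init ∈ G.obj i := by
  set P := G.toArena.outcomeFrom (Function.update ς i (sigA G i ρ a₀)) G.toArena.init with hP
  by_cases hex : ∃ n, P n ≠ ρ n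
  · have he2 : P (Nat.find hex) ≠ ρ (Nat.find hex) := Nat.find_spec hex
    set e := Nat.find hex with hedef
    have hlt : ∀ m, m < e → P m = ρ m := fun m hm => not_not.mp (Nat.find_min hex hm)
    have hde : d < e := by
      by_contra hc
      exact he2 (hagree e (by omega))
    have he1 : 1 ≤ e := by
      rcases Nat.eq_zero_or_pos e with h0 | h0
      · exfalso; apply he2; rw [h0, hP]; exact hrun.1.symm
      · exact h0
    have hWall : ∀ j, Wn G i (ρ (d + j)) := by
      intro j
      induction j with
      | zero => exact hWd
      | succ j ih =>
          by_cases how : G.toArena.owner (ρ (d + j)) = i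
          · rw [show d + (j + 1) = (d + j) + 1 by omega]
            apply wn_of_val_one G i
            have h1 := hval (d + j) how
            have h2 := val_le_one G i (ρ (d + j + 1))
            rw [val_one_of G i ih] at h1
            omega
          · rw [show d + (j + 1) = (d + j) + 1 by omega]
            have := win_step_o G i hm how ih (hrun.2 (d + j)).choose
            rw [(hrun.2 (d + j)).choose_spec] at this
            exact this
    set u := e - 1 with hu
    have hue : u + 1 = e := by omega
    have hbhu : bh P u = bh ρ u := bh_congr (fun m hmu => hlt m (by omega))
    have hmu : mode G i ρ a₀ (bh P u) = .path u := by rw [hbhu]; exact mode_rho G i ρ a₀ u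
    have how : G.toArena.owner (ρ u) ≠ i := by
      intro how
      apply he2
      rw [← hue, hP, ofrom_succ, ← hP]
      have hPu : P u = ρ u := hlt u (by omega)
      rw [hPu, how, Function.update_self, sig_path G i ρ a₀ hmu, hbhu, bh_length]
      rw [show u + 1 - 1 = u from rfl]
      rw [cract_spec G.toArena a₀ ρ u (hrun.2 u), hue]
    have hWe : Wn G i (P e) := by
      have hPe : P e = G.toArena.δ (ρ u)
          ((Function.update ς i (sigA G i ρ a₀)) (G.toArena.owner (ρ u)) (bh P u)) := by
        rw [← hue, hP, ofrom_succ, ← hP, hlt u (by omega)]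
      rw [hPe]
      exact win_step_o G i hm how (by rw [show ρ u = ρ (d + (u - d)) by congr 1; omega]; exact hWall (u - d)) _
    have hmode : ∃ w b, mode G i ρ a₀ (bh P e) = .winm w b := by
      have hcons : bh P e = P e :: bh P u := by rw [← hue]; rfl
      have hne : P e :: bh P u ≠ bh ρ (bh P u).length := by
        rw [hbhu, bh_length]
        intro hc
        have : P e = ρ (u + 1) := by
          have := congrArg List.head? hc
          simpa [show bh ρ (u+1) = ρ (u+1) :: bh ρ u from rfl] using this
        rw [hue] at this
        exact he2 this
      rw [hcons, mode_cons_path G i ρ a₀ hmu hne, fresh, if_pos hWe]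
      exact ⟨_, _, rfl⟩
    obtain ⟨w, b, hwb⟩ := hmode
    rw [hP]
    exact winm_wins G i ρ a₀ hm ς G.toArena.init (n := e) hwb
  · push_neg at hex
    have : P = ρ := funext hex
    rw [this]
    exact hwin

lemma spoil_side (hm : G.IsMuller) (τi : G.toArena.Strategy) (σ₀ ς₂ : G.toArena.Profile)
    (other : ι → List G.toArena.State → G.toArena.Act) (h' : List G.toArena.State) (d : ℕ)
    (hh' : d + 1 ≤ h'.length)
    (hsp : G.toArena.outcomeFrom (Function.update ς₂ i (fun g => τi (g ++
        (bh (G.toArena.outcomeFrom (Function.update σ₀ i τi) G.toArena.init) d).tail)))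
      (G.toArena.outcomeFrom (Function.update σ₀ i τi) G.toArena.init d) ∉ G.obj i) :
    G.toArena.outcomeFrom (Function.update (fun j g =>
      if bh (G.toArena.outcomeFrom (Function.update σ₀ i τi) G.toArena.init) d <:+ g
      then ς₂ j (g.take (g.length - d))
      else if h' <:+ g then other j g else σ₀ j g) i τi) G.toArena.init ∉ G.obj i := by
  set π' := G.toArena.outcomeFrom (Function.update σ₀ i τi) G.toArena.init with hπ'
  set χ : G.toArena.Profile := fun j g =>
      if bh π' d <:+ g then ς₂ j (g.take (g.length - d))
      else if h' <:+ g then other j g else σ₀ j g with hχ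
  set PB := G.toArena.outcomeFrom (Function.update χ i τi) G.toArena.init with hPB
  have hbelow : ∀ m, m ≤ d → PB m = π' m := by
    apply agree_below
    intro j g hg
    by_cases hj : j = i
    · rw [hj, Function.update_self, Function.update_self]
    · rw [Function.update_of_ne hj, Function.update_of_ne hj, hχ]
      have h1 : ¬ (bh π' d <:+ g) := by
        intro hc
        have := hc.length_le
        rw [bh_length] at this
        omega
      have h2 : ¬ (h' <:+ g) := by
        intro hc
        have := hc.length_le
        omega
      simp only [if_neg h1, if_neg h2]
  have hbhd : bh PB d = bh π' d := bh_congr hbelow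
  -- the continuation of PB from d equals the spoiled play
  have key := agree G.toArena (shiftP G.toArena (Function.update χ i τi) (bh PB d))
      (Function.update ς₂ i (fun g => τi (g ++ (bh π' d).tail))) (PB d) ?_
  · intro hobj
    apply hsp
    rw [shift_obj G i hm _ d] at hobj
    have heq : (fun k => PB (d + k)) = G.toArena.outcomeFrom
        (Function.update ς₂ i (fun g => τi (g ++ (bh π' d).tail))) (π' d) := by
      funext k
      rw [← hbelow d (le_refl d)]
      rw [hPB, ← (shift_down G.toArena (Function.update χ i τi) G.toArena.init d k).1, ← hPB,
        (key k).1]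
    rw [heq] at hobj
    exact hobj
  · intro j k
    set Q := G.toArena.outcomeFrom
      (Function.update ς₂ i (fun g => τi (g ++ (bh π' d).tail))) (PB d) with hQ
    have hQ0 : Q 0 = PB d := rfl
    by_cases hj : j = i
    · rw [hj, Function.update_self]
      show (Function.update χ i τi) i (bh Q k ++ (bh PB d).tail) = _
      rw [Function.update_self, hbhd]
    · show (Function.update χ i τi) j (bh Q k ++ (bh PB d).tail)
          = Function.update ς₂ i (fun g => τi (g ++ (bh π' d).tail)) j (bh Q k)
      rw [Function.update_of_ne hj, Function.update_of_ne hj]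
      obtain ⟨u, hu⟩ := bh_last Q k
      have hPd : PB d = π' d := hbelow d (le_refl d)
      have hsuf : bh π' d <:+ bh Q k ++ (bh PB d).tail := by
        have heq2 : bh Q k ++ (bh PB d).tail = u ++ bh π' d := by
          rw [hu, hQ0, hbhd, List.append_assoc, hPd]
          congr 1
          exact bh_cons_tail π' d
        exact ⟨u, heq2.symm⟩
      rw [hχ]
      simp only [if_pos hsuf]
      congr 1
      have hlen : (bh Q k ++ (bh PB d).tail).length - d = (bh Q k).length := by
        simp [List.length_append, List.length_tail]
      rw [hlen]
      exact List.take_left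
  
end MainHelp

end StmtAux
/-- every winning run along which player `i` never decreases their own
value is the outcome of a profile in which player `i` plays an admissible strategy. -/
theorem stmt12 {ι : Type} [DecidableEq ι] (G : Game ι) [Finite G.toArena.State]
    (hm : G.IsMuller) (i : ι) (ρ : ℕ → G.toArena.State)
    (hrun : G.toArena.IsRunFrom G.toArena.init ρ)
    (hwin : ρ ∈ G.obj i)
    (hval : ∀ n, G.toArena.owner (ρ n) = i → G.val i (ρ n) ≤ G.val i (ρ (n + 1))) :
    ∃ σ : G.toArena.Profile, G.Admissible i (σ i) ∧ G.toArena.outcome σ = ρ := by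
  classical
  open StmtAux in
  set a₀ : G.toArena.Act := (hrun.2 0).choose with ha₀
  refine ⟨Function.update (fun _ g => cract G.toArena a₀ ρ (g.length - 1)) i (sigA G i ρ a₀),
    ?_, funext (out_eq G i ρ a₀ hrun)⟩
  rw [Function.update_self]
  rintro ⟨τ, hdom1, σ₀, hτw, hσl⟩
  set π := G.toArena.outcomeFrom (Function.update σ₀ i (sigA G i ρ a₀)) G.toArena.init with hπ
  set π' := G.toArena.outcomeFrom (Function.update σ₀ i τ) G.toArena.init with hπ'
  have hσl' : π ∉ G.obj i := hσl
  have hτw' : π' ∈ G.obj i := hτw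
  have hneq : ∃ n, π n ≠ π' n := by
    by_contra hc
    push_neg at hc
    exact hσl' (by rw [funext hc]; exact hτw')
  have hdiff : π (Nat.find hneq) ≠ π' (Nat.find hneq) := Nat.find_spec hneq
  set d := Nat.find hneq with hd
  have hlt : ∀ m, m < d → π m = π' m := fun m hm' => not_not.mp (Nat.find_min hneq hm')
  have hd1 : 1 ≤ d := by
    rcases Nat.eq_zero_or_pos d with h0 | h0
    · exfalso; apply hdiff; rw [h0]; rfl
    · exact h0
  set e := d - 1 with he
  have hed : e + 1 = d := by omega
  have hbh : bh π e = bh π' e := bh_congr (fun m hm' => hlt m (by omega))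
  have how : G.toArena.owner (π e) = i := by
    by_contra how
    apply hdiff
    rw [← hed, hπ, hπ', ofrom_succ, ofrom_succ, ← hπ, ← hπ']
    rw [Function.update_of_ne how, ← hbh]
    rw [show π' e = π e from (hlt e (by omega)).symm]
    rw [Function.update_of_ne how]
  have hs1 : π d = G.toArena.δ (π e) (sigA G i ρ a₀ (bh π e)) := by
    rw [← hed, hπ, ofrom_succ, ← hπ, how, Function.update_self]
  have hs2 : π' d = G.toArena.δ (π e) (τ (bh π e)) := by
    rw [← hed, hπ', ofrom_succ, ← hπ', ← hbh]
    rw [show π' e = π e from (hlt e (by omega)).symm, how, Function.update_self]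
  rcases hmode_e : mode G i ρ a₀ (bh π e) with ke | ⟨re, be⟩ | ⟨we, be⟩ | _
  · -- path case
    have hinv := mode_path_inv G i ρ a₀ hmode_e
    have hke : ke = e := by have h2 := hinv.2; rw [bh_length] at h2; omega
    rw [hke] at hmode_e hinv
    have hbre : bh π e = bh ρ e := hinv.1
    have hρm : ∀ m, m ≤ e → π m = ρ m := bh_inj hbre
    have hπd : π d = ρ d := by
      rw [hs1, sig_path G i ρ a₀ hmode_e, bh_length, show e + 1 - 1 = e by omega,
        hρm e (le_refl e), cract_spec G.toArena a₀ ρ e (hrun.2 e), hed]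
    have hρd : ∀ m, m ≤ d → π m = ρ m := by
      intro m hm'
      rcases Nat.lt_or_ge m d with h | h
      · exact hρm m (by omega)
      · rw [show m = d by omega]; exact hπd
    by_cases hsp : G.WinFrom i (π' d) (fun g => τ (g ++ (bh π' d).tail))
    · -- no spoiler: τ wins from π' d, so value 1, contradiction via path_win
      have hWd' : Wn G i (π e) := win_step_i G i hm how hs2.symm hsp
      have hWe : Wn G i (ρ e) := by rw [← hρm e (le_refl e)]; exact hWd'
      have hWd : Wn G i (ρ d) := by
        rw [← hed]
        apply wn_of_val_one G i
        have h1 := hval e (by rw [← hρm e (le_refl e)]; exact how)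
        have h2 := val_le_one G i (ρ (e + 1))
        rw [val_one_of G i hWe] at h1
        omega
      exact hσl' (path_win G i ρ a₀ hm hrun hwin hval σ₀ d hρd hWd)
    · simp only [Game.WinFrom, not_forall] at hsp
      obtain ⟨ς₂, hς₂⟩ := hsp
      set χ : G.toArena.Profile := fun j g =>
        if bh π' d <:+ g then ς₂ j (g.take (g.length - d))
        else if bh π d <:+ g then cract G.toArena a₀ ρ (g.length - 1) else σ₀ j g with hχ
      have hB := spoil_side G i hm τ σ₀ ς₂ (fun _ g => cract G.toArena a₀ ρ (g.length - 1))
        (bh π d) d (by rw [bh_length]) hς₂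
      have hPA : ∀ n, (∀ m, m ≤ n →
          G.toArena.outcomeFrom (Function.update χ i (sigA G i ρ a₀)) G.toArena.init m = ρ m) := by
        intro n
        induction n with
        | zero =>
            intro m hm'
            interval_cases m
            exact hrun.1.symm
        | succ n ih =>
            intro m hm'
            rcases Nat.lt_or_ge m (n+1) with h | h
            · exact ih m (by omega)
            · rw [show m = n + 1 by omega]
              have hbha : bh (G.toArena.outcomeFrom (Function.update χ i (sigA G i ρ a₀))
                  G.toArena.init) n = bh ρ n := bh_congr ih
              rw [ofrom_succ, ih n (le_refl n), hbha]
              by_cases hown : G.toArena.owner (ρ n) = i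
              · rw [hown, Function.update_self, sig_path G i ρ a₀ (mode_rho G i ρ a₀ n),
                  bh_length, show n + 1 - 1 = n by omega]
                exact cract_spec _ a₀ ρ n (hrun.2 n)
              · rw [Function.update_of_ne hown]
                simp only [hχ]
                have hns : ¬ (bh π' d <:+ bh ρ n) := by
                  intro hc
                  have hlen := hc.length_le
                  rw [bh_length, bh_length] at hlen
                  have hdn : d ≤ n := by omega
                  have heq3 : bh π' d = bh ρ d :=
                    suffix_eq_of_length hc (bh_suffix ρ hdn) (by rw [bh_length, bh_length])
                  have hπ'd : π' d = ρ d := bh_inj heq3 d (le_refl d)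
                  exact hdiff (by rw [hπd, hπ'd])
                rw [if_neg hns]
                rcases Nat.lt_or_ge n d with hnd | hnd
                · have hns2 : ¬ (bh π d <:+ bh ρ n) := by
                    intro hc
                    have := hc.length_le
                    rw [bh_length, bh_length] at this
                    omega
                  rw [if_neg hns2]
                  have hbpn : bh π n = bh ρ n := bh_congr (fun m2 hm2 => hρd m2 (by omega))
                  have hstep : π (n+1) = G.toArena.δ (ρ n) (σ₀ (G.toArena.owner (ρ n)) (bh ρ n)) := by
                    rw [hπ, ofrom_succ, ← hπ, hρd n (by omega), hbpn, Function.update_of_ne hown]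
                  rw [← hstep, hρd (n+1) (by omega)]
                · have hsuf : bh π d <:+ bh ρ n := by
                    rw [show bh π d = bh ρ d from bh_congr hρd]
                    exact bh_suffix ρ hnd
                  rw [if_pos hsuf, bh_length, show n + 1 - 1 = n by omega]
                  exact cract_spec _ a₀ ρ n (hrun.2 n)
      have hA : G.toArena.outcome (Function.update χ i (sigA G i ρ a₀)) ∈ G.obj i := by
        have hfe : G.toArena.outcomeFrom (Function.update χ i (sigA G i ρ a₀)) G.toArena.init = ρ :=
          funext (fun n => hPA n n (le_refl n))
        show G.toArena.outcomeFrom _ G.toArena.init ∈ _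
        rw [hfe]
        exact hwin
      exact hB (hdom1 χ hA)
  · -- fol case
    obtain ⟨hb1, hb2, hre, hCp, hfollow⟩ := fol_inv G i ρ a₀ π e hmode_e
    have hπe : π e = re (e - (be-1)) := (hfollow e (by omega) (le_refl e)).1
    have hnw_e : ¬ Wn G i (π e) := (hfollow e (by omega) (le_refl e)).2
    have hrrun : ∀ n, ∃ a, G.toArena.δ (re n) a = re (n+1) := by
      intro n; rw [hre]; exact zeta_run G i a₀ _ n
    have hπd2 : π d = re (d + 1 - be) := by
      rw [hs1, sig_fol G i ρ a₀ hmode_e, bh_length, hπe,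
        show e - (be - 1) = e + 1 - be by omega,
        cract_spec G.toArena a₀ re (e+1-be) (hrrun _)]
      congr 1
      omega
    have hcons : bh π d = π d :: bh π e := by rw [← hed]; rfl
    have hcond : π d = re ((bh π e).length + 1 - be) := by
      rw [bh_length, hπd2]; congr 1; omega
    by_cases hW : Wn G i (π d)
    · have hmd : mode G i ρ a₀ (bh π d)
          = .winm (wstr G i a₀ (π d)) ((bh π e).length + 1) := by
        rw [hcons, mode_cons_fol G i ρ a₀ hmode_e, if_pos hcond, if_pos hW]
      exact hσl' (winm_wins G i ρ a₀ hm σ₀ G.toArena.init (n := d) hmd)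
    · have hmd : mode G i ρ a₀ (bh π d) = .fol re be := by
        rw [hcons, mode_cons_fol G i ρ a₀ hmode_e, if_pos hcond, if_neg hW]
      by_cases hsp : G.WinFrom i (π' d) (fun g => τ (g ++ (bh π' d).tail))
      · exact hnw_e (win_step_i G i hm how hs2.symm hsp)
      · simp only [Game.WinFrom, not_forall] at hsp
        obtain ⟨ς₂, hς₂⟩ := hsp
        set χ : G.toArena.Profile := fun j g =>
          if bh π' d <:+ g then ς₂ j (g.take (g.length - d))
          else if bh π d <:+ g then cract G.toArena a₀ re (g.length - be) else σ₀ j g with hχ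
        have hB := spoil_side G i hm τ σ₀ ς₂ (fun _ g => cract G.toArena a₀ re (g.length - be))
          (bh π d) d (by rw [bh_length]) hς₂
        set PA := G.toArena.outcomeFrom (Function.update χ i (sigA G i ρ a₀)) G.toArena.init
          with hPA
        have hbelow : ∀ m, m ≤ d → PA m = π m := by
          apply agree_below
          intro j g hg
          by_cases hj : j = i
          · rw [hj, Function.update_self, Function.update_self]
          · rw [Function.update_of_ne hj, Function.update_of_ne hj]
            simp only [hχ]
            have h1 : ¬ (bh π' d <:+ g) := by
              intro hc; have := hc.length_le; rw [bh_length] at this; omega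
            have h2 : ¬ (bh π d <:+ g) := by
              intro hc; have := hc.length_le; rw [bh_length] at this; omega
            rw [if_neg h1, if_neg h2]
        by_cases hwm : ∃ n w' b', mode G i ρ a₀ (bh PA n) = .winm w' b'
        · obtain ⟨n, w', b', hw'⟩ := hwm
          have hA : G.toArena.outcome (Function.update χ i (sigA G i ρ a₀)) ∈ G.obj i :=
            winm_wins G i ρ a₀ hm χ G.toArena.init (n := n) hw'
          exact hB (hdom1 χ hA)
        · push_neg at hwm
          have hInv : ∀ k, mode G i ρ a₀ (bh PA (d+k)) = .fol re be
              ∧ PA (d+k) = re (d+k+1-be) := by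
            intro k
            induction k with
            | zero =>
                constructor
                · rw [show bh PA (d+0) = bh π d from bh_congr (fun m hm2 => hbelow m (by omega))]
                  exact hmd
                · rw [show d + 0 = d by omega, hbelow d (le_refl d)]
                  exact hπd2
            | succ k ih =>
                obtain ⟨ihm, ihs⟩ := ih
                have hnext : PA (d+k+1) = re (d+k+2-be) := by
                  rw [hPA, ofrom_succ, ← hPA]
                  by_cases howk : G.toArena.owner (PA (d+k)) = i
                  · rw [howk, Function.update_self, sig_fol G i ρ a₀ ihm, bh_length, ihs,
                      cract_spec G.toArena a₀ re (d+k+1-be) (hrrun _)]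
                    congr 1
                    omega
                  · rw [Function.update_of_ne howk]
                    simp only [hχ]
                    have hsufd : bh PA d <:+ bh PA (d+k) := bh_suffix PA (by omega)
                    have hpd : bh PA d = bh π d := bh_congr hbelow
                    have h1 : ¬ (bh π' d <:+ bh PA (d+k)) := by
                      intro hc
                      have heq4 : bh π' d = bh PA d :=
                        suffix_eq_of_length hc hsufd (by rw [bh_length, bh_length])
                      rw [hpd] at heq4
                      exact hdiff (bh_inj heq4 d (le_refl d)).symm
                    have h2 : bh π d <:+ bh PA (d+k) := by rw [← hpd]; exact hsufd
                    rw [if_neg h1, if_pos h2, bh_length, ihs,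
                      cract_spec G.toArena a₀ re (d+k+1-be) (hrrun _)]
                    congr 1
                    omega
                constructor
                · have hconsk : bh PA (d+(k+1)) = PA (d+k+1) :: bh PA (d+k) := rfl
                  have hcondk : PA (d+k+1) = re ((bh PA (d+k)).length + 1 - be) := by
                    rw [hnext, bh_length]
                  rw [hconsk, mode_cons_fol G i ρ a₀ ihm, if_pos hcondk]
                  by_cases hWk : Wn G i (PA (d+k+1))
                  · exfalso
                    apply hwm (d+k+1) (wstr G i a₀ (PA (d+k+1))) ((bh PA (d+k)).length + 1)
                    rw [show bh PA (d+k+1) = PA (d+k+1) :: bh PA (d+k) from rfl,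
                      mode_cons_fol G i ρ a₀ ihm, if_pos hcondk, if_pos hWk]
                  · rw [if_neg hWk]
                · rw [show d + (k+1) = d + k + 1 by omega, hnext]
          have hfoll : ∀ k, PA ((be-1) + k) = re k := by
            intro k
            rcases Nat.lt_or_ge ((be-1)+k) d with hlt2 | hge2
            · rw [hbelow _ (by omega), (hfollow ((be-1)+k) (by omega) (by omega)).1]
              congr 1
              omega
            · have hx := (hInv ((be-1)+k-d)).2
              rw [show d + ((be-1)+k-d) = (be-1)+k by omega] at hx
              rw [hx]
              congr 1
              omega
          have hA : G.toArena.outcome (Function.update χ i (sigA G i ρ a₀)) ∈ G.obj i := by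
            show PA ∈ G.obj i
            rw [shift_obj G i hm _ (be-1), show (fun k => PA ((be-1) + k)) = re from funext hfoll,
              hre]
            exact zeta_obj G i a₀ hCp
          exact hB (hdom1 χ hA)
  · -- winm case
    exact hσl' (winm_wins G i ρ a₀ hm σ₀ G.toArena.init (n := e) hmode_e)
  · -- deado case
    obtain ⟨m, hm1, hm2⟩ := deado_inv G i ρ a₀ π (by rw [hπ]; exact hrun.1.symm) e hmode_e
    apply hm2
    rw [hlt m (by omega), hπ']
    exact visit_coop G i hm _ _ hτw' m
end

section
/- Admissible strategies preserve their own value: if σ_i is admissible and h is a history ending in a player-i state, then val_i of the state reached by playing σ_i(h) from last(h) equals val_i(last(h)). -/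
open scoped Classical

namespace Arena

variable {ι : Type} {A : Arena ι}

lemma steps_snd_cons (σ : A.Profile) (s : A.State) (k : ℕ) :
    (A.stepsFrom σ s k).2 = (A.stepsFrom σ s k).1 :: ((A.stepsFrom σ s k).2).tail := by
  cases k <;> simp [stepsFrom]

lemma steps_length (σ : A.Profile) (s : A.State) (k : ℕ) :
    ((A.stepsFrom σ s k).2).length = k + 1 := by
  induction k with
  | zero => simp [stepsFrom]
  | succ k ih => simp [stepsFrom, ih]

lemma steps_concat (σ : A.Profile) (s : A.State) (k : ℕ) :
    ∃ q, (A.stepsFrom σ s k).2 = q ++ [s] := by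
  induction k with
  | zero => exact ⟨[], rfl⟩
  | succ k ih =>
    obtain ⟨q, hq⟩ := ih
    refine ⟨A.δ (A.stepsFrom σ s k).1 (σ (A.owner (A.stepsFrom σ s k).1) (A.stepsFrom σ s k).2) :: q, ?_⟩
    show A.δ (A.stepsFrom σ s k).1 (σ (A.owner (A.stepsFrom σ s k).1) (A.stepsFrom σ s k).2)
      :: (A.stepsFrom σ s k).2 = _
    rw [hq]; rfl

lemma steps_congr (σ σ' : A.Profile) (s : A.State) (K : ℕ)
    (hag : ∀ k < K, σ (A.owner (A.stepsFrom σ s k).1) (A.stepsFrom σ s k).2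
      = σ' (A.owner (A.stepsFrom σ s k).1) (A.stepsFrom σ s k).2) :
    A.stepsFrom σ s K = A.stepsFrom σ' s K := by
  induction K with
  | zero => rfl
  | succ K ih =>
    have hK := ih (fun k hk => hag k (Nat.lt_succ_of_lt hk))
    show (_, _) = (_, _)
    rw [hag K (Nat.lt_succ_self K), hK]

def shiftProf (L : List A.State) (σ : A.Profile) : A.Profile := fun j m => σ j (m ++ L)

lemma steps_splice (σ : A.Profile) (s : A.State) (n k : ℕ) :
    A.stepsFrom σ s (n + k) =
      ((A.stepsFrom (shiftProf ((A.stepsFrom σ s n).2.tail) σ) (A.stepsFrom σ s n).1 k).1,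
       (A.stepsFrom (shiftProf ((A.stepsFrom σ s n).2.tail) σ) (A.stepsFrom σ s n).1 k).2
         ++ (A.stepsFrom σ s n).2.tail) := by
  induction k with
  | zero =>
    show A.stepsFrom σ s n = _
    conv_lhs => rw [show A.stepsFrom σ s n = ((A.stepsFrom σ s n).1, (A.stepsFrom σ s n).2) from rfl, steps_snd_cons]
    rfl
  | succ k ih =>
    show A.stepsFrom σ s ((n + k) + 1) = _
    rw [show A.stepsFrom σ s (n+k+1) = (A.δ (A.stepsFrom σ s (n+k)).1
        (σ (A.owner (A.stepsFrom σ s (n+k)).1) (A.stepsFrom σ s (n+k)).2),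
        A.δ (A.stepsFrom σ s (n+k)).1 (σ (A.owner (A.stepsFrom σ s (n+k)).1) (A.stepsFrom σ s (n+k)).2)
          :: (A.stepsFrom σ s (n+k)).2) from rfl, ih]
    rfl

lemma steps_suffix (σ : A.Profile) (s : A.State) (n k : ℕ) :
    (A.stepsFrom σ s n).2 <:+ (A.stepsFrom σ s (n + k)).2 := by
  rw [steps_splice σ s n k]
  obtain ⟨q, hq⟩ := steps_concat (shiftProf ((A.stepsFrom σ s n).2.tail) σ) (A.stepsFrom σ s n).1 k
  refine ⟨q, ?_⟩
  show q ++ _ = _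
  rw [hq, List.append_assoc]
  show _ = q ++ ((A.stepsFrom σ s n).1 :: (A.stepsFrom σ s n).2.tail)
  congr 1
  exact steps_snd_cons σ s n

lemma shiftProf_update [DecidableEq ι] (L : List A.State) (σ : A.Profile) (i : ι) (σi : A.Strategy) :
    shiftProf L (Function.update σ i σi) = Function.update (shiftProf L σ) i (fun m => σi (m ++ L)) := by
  funext j m
  simp only [shiftProf, Function.update_apply]
  split <;> rfl

lemma suffix_eq_of_length {α : Type*} {h h' L : List α} (ha : h <:+ L) (hb : h' <:+ L)
    (hl : h.length = h'.length) : h = h' := by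
  obtain ⟨u, rfl⟩ := ha
  obtain ⟨v, hv⟩ := hb
  have hlen : u.length = v.length := by
    have := congrArg List.length hv
    simp at this; omega
  exact (List.append_inj hv.symm hlen).2

end Arena
namespace Arena

variable {ι : Type} {A : Arena ι}

lemma no_trigger (σ : A.Profile) (s₀ : A.State) (h : List A.State) (n : ℕ)
    (hlen : h.length = n + 1) (hne : (A.stepsFrom σ s₀ n).2 ≠ h) (m : ℕ) :
    ¬ h <:+ (A.stepsFrom σ s₀ m).2 := by
  intro htr
  have hlm := htr.length_le
  rw [steps_length, hlen] at hlm
  have hnm : n ≤ m := by omega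
  have hsuf : (A.stepsFrom σ s₀ n).2 <:+ (A.stepsFrom σ s₀ m).2 := by
    have := steps_suffix σ s₀ n (m - n)
    rwa [Nat.add_sub_cancel' hnm] at this
  exact hne (suffix_eq_of_length hsuf htr (by rw [steps_length, hlen]))

lemma steps_congr_of_agree (σ σ' : A.Profile) (s₀ : A.State) (h : List A.State) (n : ℕ)
    (hlen : h.length = n + 1) (hag : ∀ j l, ¬ h <:+ l → σ j l = σ' j l) :
    (∀ k, k ≤ n → A.stepsFrom σ s₀ k = A.stepsFrom σ' s₀ k) ∧
    ((A.stepsFrom σ s₀ n).2 ≠ h → ∀ k, A.stepsFrom σ s₀ k = A.stepsFrom σ' s₀ k) := by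
  constructor
  · intro k hk
    refine steps_congr σ σ' s₀ k (fun m hmk => hag _ _ ?_)
    intro htr
    have := htr.length_le
    rw [steps_length, hlen] at this
    omega
  · intro hne k
    exact steps_congr σ σ' s₀ k (fun m _ => hag _ _ (no_trigger σ s₀ h n hlen hne m))

lemma steps_congr_from (σ σ' : A.Profile) (s : A.State)
    (hag : ∀ j r, σ j (r ++ [s]) = σ' j (r ++ [s])) (K : ℕ) :
    A.stepsFrom σ s K = A.stepsFrom σ' s K := by
  refine steps_congr σ σ' s K (fun m _ => ?_)
  obtain ⟨q, hq⟩ := steps_concat σ s m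
  rw [hq]
  exact hag _ q

lemma outcome_splice (σ : A.Profile) (s₀ s : A.State) (h : List A.State) (n : ℕ)
    (hst : A.stepsFrom σ s₀ n = (s, h)) (k : ℕ) :
    (A.stepsFrom σ s₀ (n + k)).1 = (A.stepsFrom (shiftProf h.tail σ) s k).1 := by
  rw [steps_splice σ s₀ n k, hst]

lemma strip_trigger {S : Type} (h : List S) (s : S) (hcons : h = s :: h.tail) (r : List S) :
    h <:+ ((r ++ [s]) ++ h.tail) ∧
    ((r ++ [s]) ++ h.tail).take (((r ++ [s]) ++ h.tail).length - h.tail.length) = r ++ [s] := by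
  have hdec : (r ++ [s]) ++ h.tail = r ++ h := by
    rw [List.append_assoc]
    congr 1
    exact hcons.symm
  constructor
  · rw [hdec]; exact ⟨r, rfl⟩
  · have hlen : ((r ++ [s]) ++ h.tail).length - h.tail.length = (r ++ [s]).length := by
      have : 1 ≤ h.length := by rw [hcons]; simp
      simp
      omega
    rw [hlen, List.take_left]

end Arena
/-- admissible strategies preserve their own value along compatible
histories. -/
theorem stmt13 {ι : Type} [DecidableEq ι] (G : Game ι) [Finite G.toArena.State]
    (hm : G.IsMuller) (i : ι) (σi : G.toArena.Strategy)
    (hadm : G.Admissible i σi) (h : List G.toArena.State) (s : G.toArena.State)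
    (hcomp : ∃ (σ : G.toArena.Profile) (n : ℕ), σ i = σi ∧ G.toArena.histAt σ n = h)
    (hlast : h.head? = some s) (hown : G.toArena.owner s = i) :
    G.val i (G.toArena.δ s (σi h)) = G.val i s := by
  classical
  obtain ⟨σ₀, n, hσ₀i, hhist⟩ := hcomp
  rw [Arena.histAt] at hhist
  have hlen : h.length = n + 1 := by rw [← hhist, Arena.steps_length]
  have hcons' := Arena.steps_snd_cons σ₀ G.toArena.init n
  rw [hhist] at hcons'
  have hfst0 : (G.toArena.stepsFrom σ₀ G.toArena.init n).1 = s := by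
    have : h.head? = some (G.toArena.stepsFrom σ₀ G.toArena.init n).1 := by
      rw [hcons']; rfl
    rw [hlast] at this
    exact (Option.some_injective _ this).symm
  have hcons : h = s :: h.tail := by
    conv_lhs => rw [hcons']
    rw [hfst0]
  have hst0 : G.toArena.stepsFrom σ₀ G.toArena.init n = (s, h) := by
    rw [Prod.ext_iff]; exact ⟨hfst0, hhist⟩
  set a := σi h with ha
  set t := G.toArena.δ s a with ht
  -- prefix independence
  have PI : ∀ (ρ : ℕ → G.toArena.State) (c : ℕ),
      ρ ∈ G.obj i ↔ (fun k => ρ (c + k)) ∈ G.obj i := by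
    intro ρ c
    apply hm
    ext x
    constructor
    · rintro hx N
      obtain ⟨m, hm1, hm2⟩ := hx (c + N)
      refine ⟨m - c, by omega, ?_⟩
      show ρ (c + (m - c)) = x
      rw [show c + (m - c) = m by omega]; exact hm2
    · rintro hx N
      obtain ⟨m, hm1, hm2⟩ := hx N
      exact ⟨c + m, by omega, hm2⟩
  have hdec : ∀ r : List G.toArena.State, (r ++ [s]) ++ h.tail = r ++ h := by
    intro r; rw [List.append_assoc]; congr 1; exact hcons.symm
  have fstof : ∀ P : G.toArena.Profile, (G.toArena.stepsFrom P G.toArena.init n).2 = h →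
      G.toArena.stepsFrom P G.toArena.init n = (s, h) := by
    intro P h2
    have h3 := Arena.steps_snd_cons P G.toArena.init n
    rw [h2] at h3
    rw [Prod.ext_iff]
    refine ⟨?_, h2⟩
    have := hcons.symm.trans h3
    exact (List.cons.injEq _ _ _ _ ▸ this).1.symm
  have reach : ∀ P : G.toArena.Profile, (∀ j l, ¬ h <:+ l → σ₀ j l = P j l) →
      G.toArena.stepsFrom P G.toArena.init n = (s, h) := by
    intro P hag
    apply fstof
    rw [← (Arena.steps_congr_of_agree σ₀ P G.toArena.init h n hlen hag).1 n le_rfl, hhist]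
  -- generic continuation-win lemma
  have Twin : ∀ (P ϑ : G.toArena.Profile), G.toArena.outcomeFrom ϑ s ∈ G.obj i →
      (∀ j r, P j ((r ++ [s]) ++ h.tail) = ϑ j (r ++ [s])) →
      G.toArena.stepsFrom P G.toArena.init n = (s, h) →
      G.toArena.outcome P ∈ G.obj i := by
    intro P ϑ hϑ hag hreach
    rw [Arena.outcome, PI _ n]
    have hsp := Arena.outcome_splice P G.toArena.init s h n hreach
    have hcg := Arena.steps_congr_from (Arena.shiftProf h.tail P) ϑ s
      (fun j r => hag j r)
    have : (fun k => G.toArena.outcomeFrom P G.toArena.init (n + k)) =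
        G.toArena.outcomeFrom ϑ s := by
      funext k
      rw [Arena.outcomeFrom, Arena.outcomeFrom, hsp k, hcg k]
    rw [this]
    exact hϑ
  have step1 : ∀ P : G.toArena.Profile, P (G.toArena.owner s) [s] = a →
      G.toArena.stepsFrom P s 1 = (t, [t, s]) := by
    intro P e
    show (G.toArena.δ (G.toArena.stepsFrom P s 0).1
        (P (G.toArena.owner (G.toArena.stepsFrom P s 0).1) (G.toArena.stepsFrom P s 0).2),
      G.toArena.δ (G.toArena.stepsFrom P s 0).1
        (P (G.toArena.owner (G.toArena.stepsFrom P s 0).1) (G.toArena.stepsFrom P s 0).2)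
        :: (G.toArena.stepsFrom P s 0).2) = (t, [t, s])
    rw [show G.toArena.stepsFrom P s 0 = (s, [s]) from rfl]
    simp only [e, ht]
  -- generic continuation-through-t lemma
  have Tcont : ∀ P : G.toArena.Profile, G.toArena.stepsFrom P G.toArena.init n = (s, h) →
      P i h = a →
      ∃ π : G.toArena.Profile,
        (∀ j m, π j m = P j ((m ++ [s]) ++ h.tail)) ∧
        (fun k => G.toArena.outcome P ((n + 1) + k)) = G.toArena.outcomeFrom π t := by
    intro P hreach hPa
    refine ⟨Arena.shiftProf [s] (Arena.shiftProf h.tail P), fun j m => rfl, ?_⟩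
    have hsp := Arena.outcome_splice P G.toArena.init s h n hreach
    have h1 : G.toArena.stepsFrom (Arena.shiftProf h.tail P) s 1 = (t, [t, s]) := by
      apply step1
      rw [hown]
      show P i ([s] ++ h.tail) = a
      rw [show [s] ++ h.tail = h from hcons.symm]
      exact hPa
    have hsp2 := Arena.outcome_splice (Arena.shiftProf h.tail P) s t [t, s] 1 h1
    simp only [List.tail_cons] at hsp2
    funext k
    show (G.toArena.stepsFrom P G.toArena.init ((n+1)+k)).1 = _
    rw [show (n+1)+k = n + (1 + k) by omega, hsp (1+k), hsp2 k]
    rfl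
  -- extending a winning strategy from t to s
  have W1 : (∃ σ', G.WinFrom i t σ') → ∃ σ'', G.WinFrom i s σ'' := by
    rintro ⟨σ', hσ'⟩
    refine ⟨fun l => if l.length ≤ 1 then a else σ' l.dropLast, fun σ => ?_⟩
    set P := Function.update σ i (fun l => if l.length ≤ 1 then a else σ' l.dropLast) with hP
    have h1 : G.toArena.stepsFrom P s 1 = (t, [t, s]) := by
      apply step1
      rw [hown, hP, Function.update_self]
      simp
    have hsp := Arena.outcome_splice P s t [t, s] 1 h1
    simp only [List.tail_cons] at hsp
    have hcg : ∀ K, G.toArena.stepsFrom (Arena.shiftProf [s] P) t K =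
        G.toArena.stepsFrom (Function.update (Arena.shiftProf [s] σ) i σ') t K := by
      apply Arena.steps_congr_from
      intro j r
      by_cases hj : j = i
      · rw [hj]
        show P i ((r ++ [t]) ++ [s]) = _
        rw [hP, Function.update_self, Function.update_self]
        have hne : ¬ ((r ++ [t]) ++ [s]).length ≤ 1 := by simp
        rw [if_neg hne, List.dropLast_concat]
      · show P j ((r ++ [t]) ++ [s]) = _
        rw [hP, Function.update_of_ne hj, Function.update_of_ne hj]
        rfl
    show G.toArena.outcomeFrom P s ∈ G.obj i
    rw [PI _ 1]
    have : (fun k => G.toArena.outcomeFrom P s (1 + k)) =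
        G.toArena.outcomeFrom (Function.update (Arena.shiftProf [s] σ) i σ') t := by
      funext k
      rw [Arena.outcomeFrom, Arena.outcomeFrom, hsp k, hcg k]
    rw [this]
    exact hσ' _
  -- extending runs from t to runs from s
  have ExtRun : ∀ π : G.toArena.Profile, ∃ π' : G.toArena.Profile,
      (fun k => G.toArena.outcomeFrom π' s (1 + k)) = G.toArena.outcomeFrom π t := by
    intro π
    refine ⟨fun j l => if l.length ≤ 1 then a else π j l.dropLast, ?_⟩
    set P : G.toArena.Profile := fun j l => if l.length ≤ 1 then a else π j l.dropLast with hP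
    have h1 : G.toArena.stepsFrom P s 1 = (t, [t, s]) := by
      apply step1
      rw [hP]; simp
    have hsp := Arena.outcome_splice P s t [t, s] 1 h1
    simp only [List.tail_cons] at hsp
    have hcg : ∀ K, G.toArena.stepsFrom (Arena.shiftProf [s] P) t K =
        G.toArena.stepsFrom π t K := by
      apply Arena.steps_congr_from
      intro j r
      show P j ((r ++ [t]) ++ [s]) = _
      rw [hP]
      have hne : ¬ ((r ++ [t]) ++ [s]).length ≤ 1 := by simp
      simp only [if_neg hne, List.dropLast_concat]
    funext k
    rw [Arena.outcomeFrom, Arena.outcomeFrom, hsp k, hcg k]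
  -- main case analysis
  by_cases hW : ∃ σw, G.WinFrom i s σw
  · -- val s = 1
    obtain ⟨σw, hσw⟩ := hW
    have hWs : ∃ σw, G.WinFrom i s σw := ⟨σw, hσw⟩
    suffices hWt : ∃ σ', G.WinFrom i t σ' by
      simp only [Game.val]
      rw [if_pos hWt, if_pos hWs]
    by_contra hWt
    push_neg at hWt
    have hnw : ¬ G.WinFrom i t (fun m => σi (m ++ h)) := hWt _
    rw [Game.WinFrom] at hnw
    push_neg at hnw
    obtain ⟨σm, hσm⟩ := hnw
    obtain ⟨τ, hτoff, hτtrig⟩ : ∃ τ : G.toArena.Strategy,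
        (∀ l, ¬ h <:+ l → τ l = σi l) ∧
        (∀ r, τ ((r ++ [s]) ++ h.tail) = σw (r ++ [s])) := by
      refine ⟨fun l => if h <:+ l then σw (l.take (l.length - h.tail.length)) else σi l,
        fun l hl => if_neg hl, fun r => ?_⟩
      obtain ⟨h1, h2⟩ := Arena.strip_trigger h s hcons r
      show (if h <:+ ((r ++ [s]) ++ h.tail)
        then σw (((r ++ [s]) ++ h.tail).take (((r ++ [s]) ++ h.tail).length - h.tail.length))
        else σi ((r ++ [s]) ++ h.tail)) = _
      rw [if_pos h1, h2]
    obtain ⟨σh, hσhoff, hσhtrig⟩ : ∃ σh : G.toArena.Profile,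
        (∀ j l, ¬ h <:+ l → σh j l = σ₀ j l) ∧
        (∀ j r, σh j ((r ++ [s]) ++ h.tail) = σm j r) := by
      refine ⟨fun j l => if h <:+ l
          then σm j ((l.take (l.length - h.tail.length)).dropLast) else σ₀ j l,
        fun j l hl => if_neg hl, fun j r => ?_⟩
      obtain ⟨h1, h2⟩ := Arena.strip_trigger h s hcons r
      show (if h <:+ ((r ++ [s]) ++ h.tail)
        then σm j ((((r ++ [s]) ++ h.tail).take (((r ++ [s]) ++ h.tail).length - h.tail.length)).dropLast)
        else σ₀ j ((r ++ [s]) ++ h.tail)) = _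
      rw [if_pos h1, h2, List.dropLast_concat]
    apply hadm
    refine ⟨τ, ?_, σh, ?_, ?_⟩
    · -- τ wins whenever σi does
      intro σ hσ
      have hag : ∀ j l, ¬ h <:+ l →
          (Function.update σ i σi) j l = (Function.update σ i τ) j l := by
        intro j l hl
        by_cases hj : j = i
        · rw [hj, Function.update_self, Function.update_self, hτoff l hl]
        · rw [Function.update_of_ne hj, Function.update_of_ne hj]
      by_cases hr : (G.toArena.stepsFrom (Function.update σ i σi) G.toArena.init n).2 = h
      · have hreach := fstof _ hr
        have hreach' : G.toArena.stepsFrom (Function.update σ i τ) G.toArena.init n = (s, h) := by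
          rw [← (Arena.steps_congr_of_agree _ _ _ h n hlen hag).1 n le_rfl]
          exact hreach
        refine Twin _ (Function.update (Arena.shiftProf h.tail σ) i σw) (hσw _) ?_ hreach'
        intro j r
        by_cases hj : j = i
        · rw [hj, Function.update_self, Function.update_self]
          exact hτtrig r
        · rw [Function.update_of_ne hj, Function.update_of_ne hj]
          rfl
      · have hall := (Arena.steps_congr_of_agree _ _ _ h n hlen hag).2 hr
        have heq : G.toArena.outcome (Function.update σ i σi)
            = G.toArena.outcome (Function.update σ i τ) := by
          funext k
          exact congrArg Prod.fst (hall k)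
        rwa [← heq]
    · -- τ wins against σh
      have hreach : G.toArena.stepsFrom (Function.update σh i τ) G.toArena.init n = (s, h) := by
        apply reach
        intro j l hl
        by_cases hj : j = i
        · rw [hj, Function.update_self, hτoff l hl, hσ₀i]
        · rw [Function.update_of_ne hj, hσhoff j l hl]
      refine Twin _ (Function.update (Arena.shiftProf h.tail σh) i σw) (hσw _) ?_ hreach
      intro j r
      by_cases hj : j = i
      · rw [hj, Function.update_self, Function.update_self]
        exact hτtrig r
      · rw [Function.update_of_ne hj, Function.update_of_ne hj]
        rfl
    · -- σi loses against σh
      have hreach : G.toArena.stepsFrom (Function.update σh i σi) G.toArena.init n = (s, h) := by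
        apply reach
        intro j l hl
        by_cases hj : j = i
        · rw [hj, Function.update_self, hσ₀i]
        · rw [Function.update_of_ne hj, hσhoff j l hl]
      obtain ⟨π, hπ1, hπ2⟩ := Tcont _ hreach (by rw [Function.update_self])
      have hcg : ∀ K, G.toArena.stepsFrom π t K =
          G.toArena.stepsFrom (Function.update σm i (fun m => σi (m ++ h))) t K := by
        apply Arena.steps_congr_from
        intro j r
        rw [hπ1]
        by_cases hj : j = i
        · rw [hj, Function.update_self, Function.update_self, hdec (r ++ [t])]
        · rw [Function.update_of_ne hj, Function.update_of_ne hj]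
          exact hσhtrig j (r ++ [t])
      intro hcontra
      apply hσm
      rw [PI _ (n + 1)] at hcontra
      rw [hπ2] at hcontra
      have heq : G.toArena.outcomeFrom π t
          = G.toArena.outcomeFrom (Function.update σm i (fun m => σi (m ++ h))) t := by
        funext k
        exact congrArg Prod.fst (hcg k)
      rwa [heq] at hcontra
  · by_cases hL : ∀ π : G.toArena.Profile, G.toArena.outcomeFrom π s ∉ G.obj i
    · -- val s = -1
      have h1 : ¬ ∃ σ', G.WinFrom i t σ' := fun hx => hW (W1 hx)
      have h2 : ∀ π : G.toArena.Profile, G.toArena.outcomeFrom π t ∉ G.obj i := by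
        intro π hπ
        obtain ⟨π', hπ'⟩ := ExtRun π
        exact hL π' ((PI _ 1).mpr (by rw [hπ']; exact hπ))
      simp only [Game.val]
      rw [if_neg h1, if_pos h2, if_neg hW, if_pos hL]
    · -- val s = 0
      push_neg at hL
      obtain ⟨σ₁, hσ₁⟩ := hL
      have h1 : ¬ ∃ σ', G.WinFrom i t σ' := fun hx => hW (W1 hx)
      have hK : ¬ ∀ π : G.toArena.Profile, G.toArena.outcomeFrom π t ∉ G.obj i := by
        intro hK
        obtain ⟨τ, hτoff, hτtrig⟩ : ∃ τ : G.toArena.Strategy,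
            (∀ l, ¬ h <:+ l → τ l = σi l) ∧
            (∀ r, τ ((r ++ [s]) ++ h.tail) = σ₁ i (r ++ [s])) := by
          refine ⟨fun l => if h <:+ l then σ₁ i (l.take (l.length - h.tail.length)) else σi l,
            fun l hl => if_neg hl, fun r => ?_⟩
          obtain ⟨h1', h2'⟩ := Arena.strip_trigger h s hcons r
          show (if h <:+ ((r ++ [s]) ++ h.tail)
            then σ₁ i (((r ++ [s]) ++ h.tail).take (((r ++ [s]) ++ h.tail).length - h.tail.length))
            else σi ((r ++ [s]) ++ h.tail)) = _
          rw [if_pos h1', h2']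
        obtain ⟨σh, hσhoff, hσhtrig⟩ : ∃ σh : G.toArena.Profile,
            (∀ j l, ¬ h <:+ l → σh j l = σ₀ j l) ∧
            (∀ j r, σh j ((r ++ [s]) ++ h.tail) = σ₁ j (r ++ [s])) := by
          refine ⟨fun j l => if h <:+ l
              then σ₁ j (l.take (l.length - h.tail.length)) else σ₀ j l,
            fun j l hl => if_neg hl, fun j r => ?_⟩
          obtain ⟨h1', h2'⟩ := Arena.strip_trigger h s hcons r
          show (if h <:+ ((r ++ [s]) ++ h.tail)
            then σ₁ j (((r ++ [s]) ++ h.tail).take (((r ++ [s]) ++ h.tail).length - h.tail.length))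
            else σ₀ j ((r ++ [s]) ++ h.tail)) = _
          rw [if_pos h1', h2']
        apply hadm
        refine ⟨τ, ?_, σh, ?_, ?_⟩
        · -- τ wins whenever σi does
          intro σ hσ
          have hr : (G.toArena.stepsFrom (Function.update σ i σi) G.toArena.init n).2 ≠ h := by
            intro hr
            have hreach := fstof _ hr
            obtain ⟨π, hπ1, hπ2⟩ := Tcont _ hreach (by rw [Function.update_self])
            exact hK π (by rw [← hπ2]; exact (PI _ (n + 1)).mp hσ)
          have hag : ∀ j l, ¬ h <:+ l →
              (Function.update σ i σi) j l = (Function.update σ i τ) j l := by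
            intro j l hl
            by_cases hj : j = i
            · rw [hj, Function.update_self, Function.update_self, hτoff l hl]
            · rw [Function.update_of_ne hj, Function.update_of_ne hj]
          have hall := (Arena.steps_congr_of_agree _ _ _ h n hlen hag).2 hr
          have heq : G.toArena.outcome (Function.update σ i σi)
              = G.toArena.outcome (Function.update σ i τ) := by
            funext k
            exact congrArg Prod.fst (hall k)
          rwa [← heq]
        · -- τ wins against σh
          have hreach : G.toArena.stepsFrom (Function.update σh i τ) G.toArena.init n = (s, h) := by
            apply reach
            intro j l hl
            by_cases hj : j = i
            · rw [hj, Function.update_self, hτoff l hl, hσ₀i]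
            · rw [Function.update_of_ne hj, hσhoff j l hl]
          refine Twin _ σ₁ hσ₁ ?_ hreach
          intro j r
          by_cases hj : j = i
          · rw [hj, Function.update_self]
            exact hτtrig r
          · rw [Function.update_of_ne hj]
            exact hσhtrig j r
        · -- σi loses against σh
          have hreach : G.toArena.stepsFrom (Function.update σh i σi) G.toArena.init n = (s, h) := by
            apply reach
            intro j l hl
            by_cases hj : j = i
            · rw [hj, Function.update_self, hσ₀i]
            · rw [Function.update_of_ne hj, hσhoff j l hl]
          obtain ⟨π, hπ1, hπ2⟩ := Tcont _ hreach (by rw [Function.update_self])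
          intro hcontra
          exact hK π (by rw [← hπ2]; exact (PI _ (n + 1)).mp hcontra)
      simp only [Game.val]
      rw [if_neg h1, if_neg hK, if_neg hW, if_neg (fun hq => hq σ₁ hσ₁)]
end

section
/- For prefix-independent objectives φ_i per player, the rule AG^∧ has a solution if and only if there exists a run ρ from the initial state that visits only states in ⋂_i W_i and satisfies ⋀_i φ_i, where W_i is the set of states from which player i can win the objective (⋀_{j≠i} φ_j) → φ_i. -/
open scoped Classical

/-- The set of states from which player `i` can win the objective
`(⋀_{j≠i} φ_j) → φ_i`. -/
def Game.Whyp {ι : Type} [DecidableEq ι] (G : Game ι) (i : ι) : Set G.toArena.State :=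
  {s | ∃ σi : G.toArena.Strategy, ∀ σ : G.toArena.Profile,
    (∀ j, j ≠ i → G.toArena.outcomeFrom (Function.update σ i σi) s ∈ G.obj j) →
    G.toArena.outcomeFrom (Function.update σ i σi) s ∈ G.obj i}

namespace AuxStmt14

lemma steps_snd_length {ι : Type} (A : Arena ι) (σ : A.Profile) (s : A.State) :
    ∀ n, (A.stepsFrom σ s n).2.length = n + 1
  | 0 => rfl
  | n + 1 => by
    simp [Arena.stepsFrom, steps_snd_length A σ s n]

lemma steps_zero {ι : Type} (A : Arena ι) (σ : A.Profile) (s : A.State) :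
    A.stepsFrom σ s 0 = (s, [s]) := rfl

lemma steps_succ {ι : Type} (A : Arena ι) (σ : A.Profile) (s : A.State) (n : ℕ) :
    A.stepsFrom σ s (n + 1) =
      (A.δ (A.stepsFrom σ s n).1 (σ (A.owner (A.stepsFrom σ s n).1) (A.stepsFrom σ s n).2),
       A.δ (A.stepsFrom σ s n).1 (σ (A.owner (A.stepsFrom σ s n).1) (A.stepsFrom σ s n).2)
         :: (A.stepsFrom σ s n).2) := rfl

lemma steps_snd_cons {ι : Type} (A : Arena ι) (σ : A.Profile) (s : A.State) (n : ℕ) :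
    (A.stepsFrom σ s n).2 = (A.stepsFrom σ s n).1 :: (A.stepsFrom σ s n).2.tail := by
  cases n <;> rfl

lemma steps_snd_suffix {ι : Type} (A : Arena ι) (σ : A.Profile) (s : A.State)
    {n₁ n₂ : ℕ} (h : n₁ ≤ n₂) : (A.stepsFrom σ s n₁).2 <:+ (A.stepsFrom σ s n₂).2 := by
  induction n₂ with
  | zero =>
    have : n₁ = 0 := by omega
    subst this; exact List.suffix_refl _
  | succ n ih =>
    rcases Nat.lt_or_ge n₁ (n + 1) with h' | h'
    · exact (ih (by omega)).trans (by simp [Arena.stepsFrom, List.suffix_cons])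
    · have : n₁ = n + 1 := by omega
      subst this; exact List.suffix_refl _

lemma prefixIndep_shift {S : Type} {φ : Set (ℕ → S)} (h : PrefixIndep φ) (ρ : ℕ → S) :
    ∀ n, (ρ ∈ φ ↔ (fun k => ρ (n + k)) ∈ φ)
  | 0 => by simp
  | n + 1 => by
    calc ρ ∈ φ ↔ (fun k => ρ (n + k)) ∈ φ := prefixIndep_shift h ρ n
      _ ↔ (fun k => ρ (n + (k + 1))) ∈ φ := h _
      _ ↔ (fun k => ρ (n + 1 + k)) ∈ φ := by
          rw [show (fun k => ρ (n + (k + 1))) = (fun k => ρ (n + 1 + k)) from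
            funext fun k => by congr 1; omega]

def revList {S : Type} (ρ : ℕ → S) : ℕ → List S
  | 0 => [ρ 0]
  | n + 1 => ρ (n + 1) :: revList ρ n

lemma revList_length {S : Type} (ρ : ℕ → S) : ∀ n, (revList ρ n).length = n + 1
  | 0 => rfl
  | n + 1 => by simp [revList, revList_length ρ n]

lemma revList_suffix {S : Type} (ρ : ℕ → S) {a b : ℕ} (h : a ≤ b) :
    revList ρ a <:+ revList ρ b := by
  induction b with
  | zero =>
    have : a = 0 := by omega
    subst this; exact List.suffix_refl _
  | succ n ih =>
    rcases Nat.lt_or_ge a (n + 1) with h' | h'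
    · exact (ih (by omega)).trans (by simp [revList, List.suffix_cons])
    · have : a = n + 1 := by omega
      subst this; exact List.suffix_refl _

lemma revList_cons {S : Type} (ρ : ℕ → S) (n : ℕ) :
    revList ρ n = ρ n :: (revList ρ n).tail := by
  cases n <;> rfl

lemma suffix_eq_of_length {S : Type} {l₁ l₂ l : List S}
    (h₁ : l₁ <:+ l) (h₂ : l₂ <:+ l) (h : l₁.length = l₂.length) : l₁ = l₂ := by
  obtain ⟨t₁, rfl⟩ := h₁
  obtain ⟨t₂, e⟩ := h₂
  exact (List.append_inj e.symm (by
    have := congrArg List.length e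
    simp at this ⊢
    omega)).2

noncomputable def conSigma {ι : Type} [DecidableEq ι] (G : Game ι)
    (ρ : ℕ → G.toArena.State) (act : ℕ → G.toArena.Act)
    (wst : ℕ → ι → G.toArena.Strategy) : G.toArena.Profile :=
  fun j h =>
    if h = revList ρ (h.length - 1) then act (h.length - 1)
    else wst (Nat.findGreatest (fun k => revList ρ k <:+ h) h.length) j
      (h.take (h.length - Nat.findGreatest (fun k => revList ρ k <:+ h) h.length))

end AuxStmt14

/-- characterization of assume-guarantee-∧ for prefix-independent
objectives. -/
theorem stmt14 {ι : Type} [DecidableEq ι] (G : Game ι)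
    (hpi : ∀ i : ι, PrefixIndep (G.obj i)) :
    G.AGand ↔ ∃ ρ : ℕ → G.toArena.State, G.toArena.IsRunFrom G.toArena.init ρ ∧
      (∀ (n : ℕ) (i : ι), ρ n ∈ G.Whyp i) ∧ (∀ i : ι, ρ ∈ G.obj i) := by
  classical
  open AuxStmt14 in
  constructor
  · rintro ⟨σ, h1, h2⟩
    refine ⟨G.toArena.outcome σ, ⟨rfl, fun n =>
      ⟨σ (G.toArena.owner (G.toArena.outcome σ n)) (G.toArena.histAt σ n), rfl⟩⟩, ?_, h1⟩
    intro n i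
    refine ⟨fun h => σ i (h ++ (G.toArena.histAt σ n).tail), fun σ'' hyp => ?_⟩
    set tl := (G.toArena.histAt σ n).tail with htl
    set σi : G.toArena.Strategy := fun h => σ i (h ++ tl) with hσi
    set τ : G.toArena.Profile :=
      fun j h => if h.length ≤ n then σ j h else σ'' j (h.take (h.length - n)) with hτ
    have htllen : tl.length = n := by
      rw [htl]
      have := steps_snd_length G.toArena σ G.toArena.init n
      simp only [Arena.histAt, List.length_tail, this]
      omega
    have claimA : ∀ m, m ≤ n →
        G.toArena.stepsFrom (Function.update τ i (σ i)) G.toArena.init m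
          = G.toArena.stepsFrom σ G.toArena.init m := by
      intro m
      induction m with
      | zero => intro _; rfl
      | succ m ih =>
        intro hm
        have hp := ih (by omega)
        rw [steps_succ, steps_succ, hp]
        have hstrat : Function.update τ i (σ i)
              (G.toArena.owner (G.toArena.stepsFrom σ G.toArena.init m).1)
              (G.toArena.stepsFrom σ G.toArena.init m).2
            = σ (G.toArena.owner (G.toArena.stepsFrom σ G.toArena.init m).1)
              (G.toArena.stepsFrom σ G.toArena.init m).2 := by
          by_cases howner : G.toArena.owner (G.toArena.stepsFrom σ G.toArena.init m).1 = i
          · rw [howner, Function.update_self]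
          · rw [Function.update_of_ne howner, hτ]
            simp only
            rw [if_pos (by rw [steps_snd_length]; omega)]
        rw [hstrat]
    have claimB : ∀ k, G.toArena.stepsFrom (Function.update τ i (σ i)) G.toArena.init (n + k)
        = ((G.toArena.stepsFrom (Function.update σ'' i σi) (G.toArena.outcome σ n) k).1,
           (G.toArena.stepsFrom (Function.update σ'' i σi) (G.toArena.outcome σ n) k).2 ++ tl) := by
      intro k
      induction k with
      | zero =>
        rw [Nat.add_zero, claimA n le_rfl, steps_zero]
        refine Prod.ext rfl ?_
        show (G.toArena.stepsFrom σ G.toArena.init n).2 = [G.toArena.outcome σ n] ++ tl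
        rw [htl]
        exact steps_snd_cons G.toArena σ G.toArena.init n
      | succ k ih =>
        rw [show n + (k + 1) = (n + k) + 1 from rfl, steps_succ, steps_succ, ih]
        dsimp only
        have hlen : (G.toArena.stepsFrom (Function.update σ'' i σi)
            (G.toArena.outcome σ n) k).2.length = k + 1 := steps_snd_length _ _ _ k
        have hstrat : Function.update τ i (σ i)
              (G.toArena.owner (G.toArena.stepsFrom (Function.update σ'' i σi)
                (G.toArena.outcome σ n) k).1)
              ((G.toArena.stepsFrom (Function.update σ'' i σi)
                (G.toArena.outcome σ n) k).2 ++ tl)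
            = Function.update σ'' i σi
              (G.toArena.owner (G.toArena.stepsFrom (Function.update σ'' i σi)
                (G.toArena.outcome σ n) k).1)
              (G.toArena.stepsFrom (Function.update σ'' i σi)
                (G.toArena.outcome σ n) k).2 := by
          by_cases howner : G.toArena.owner ((G.toArena.stepsFrom (Function.update σ'' i σi)
              (G.toArena.outcome σ n) k).1) = i
          · rw [howner, Function.update_self, Function.update_self, hσi]
          · rw [Function.update_of_ne howner, Function.update_of_ne howner, hτ]
            simp only
            rw [if_neg (by simp [hlen, htllen]), show ((G.toArena.stepsFrom
                (Function.update σ'' i σi) (G.toArena.outcome σ n) k).2 ++ tl).length - n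
                = (G.toArena.stepsFrom (Function.update σ'' i σi)
                  (G.toArena.outcome σ n) k).2.length by
                simp [hlen, htllen], List.take_left]
        rw [hstrat, List.cons_append]
    have houtcome : (fun k => G.toArena.outcome (Function.update τ i (σ i)) (n + k))
        = G.toArena.outcomeFrom (Function.update σ'' i σi) (G.toArena.outcome σ n) :=
      funext fun k => by
        show (G.toArena.stepsFrom (Function.update τ i (σ i)) G.toArena.init (n + k)).1 = _
        rw [claimB k]
        rfl
    have hyp' : ∀ j, j ≠ i →
        G.toArena.outcome (Function.update τ i (σ i)) ∈ G.obj j := by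
      intro j hj
      exact (prefixIndep_shift (hpi j) _ n).mpr (by rw [houtcome]; exact hyp j hj)
    have hconc := h2 i τ hyp'
    have := (prefixIndep_shift (hpi i) (G.toArena.outcome (Function.update τ i (σ i))) n).mp hconc
    rwa [houtcome] at this
  · rintro ⟨ρ, hrun, hW, hφ⟩
    choose act hact using hrun.2
    simp only [Game.Whyp, Set.mem_setOf_eq] at hW
    choose wst hwst using hW
    set σ := AuxStmt14.conSigma G ρ act wst with hσ
    have hσmatch : ∀ j m', σ j (revList ρ m') = act m' := by
      intro j m'
      rw [hσ]
      simp only [AuxStmt14.conSigma, revList_length]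
      simp
    have key : ∀ n, G.toArena.stepsFrom σ G.toArena.init n = (ρ n, revList ρ n) := by
      intro n
      induction n with
      | zero =>
        rw [steps_zero, ← hrun.1]
        rfl
      | succ n ih =>
        rw [steps_succ, ih]
        dsimp only
        rw [hσmatch, hact]
        rfl
    have hout : G.toArena.outcome σ = ρ := funext fun n => by
      show (G.toArena.stepsFrom σ G.toArena.init n).1 = ρ n
      rw [key n]
    refine ⟨σ, fun i => hout ▸ hφ i, ?_⟩
    intro i σ' hyp
    set u := Function.update σ' i (σ i) with hu
    by_cases hall : ∀ n, G.toArena.stepsFrom u G.toArena.init n = (ρ n, revList ρ n)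
    · have : G.toArena.outcome u = ρ := funext fun n => by
        show (G.toArena.stepsFrom u G.toArena.init n).1 = ρ n
        rw [hall n]
      rw [this]
      exact hφ i
    · push_neg at hall
      have h0 : G.toArena.stepsFrom u G.toArena.init 0 = (ρ 0, revList ρ 0) := by
        rw [steps_zero, ← hrun.1]
        rfl
      have hNpos : 0 < Nat.find hall := by
        rcases Nat.eq_zero_or_pos (Nat.find hall) with h | h
        · exact absurd h0 (h ▸ Nat.find_spec hall)
        · exact h
      set m := Nat.find hall - 1 with hm
      have hNm : Nat.find hall = m + 1 := by omega
      have hstepm : G.toArena.stepsFrom u G.toArena.init m = (ρ m, revList ρ m) :=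
        not_not.mp (Nat.find_min hall (by omega))
      have hNe : G.toArena.stepsFrom u G.toArena.init (m + 1) ≠ (ρ (m + 1), revList ρ (m + 1)) :=
        hNm ▸ Nat.find_spec hall
      have howner : G.toArena.owner (ρ m) ≠ i := by
        intro hh
        apply hNe
        rw [steps_succ, hstepm]
        dsimp only
        rw [hh, hu, Function.update_self, hσmatch, hact]
        rfl
      have hu_m : ∀ l, u (G.toArena.owner (ρ m)) l = σ' (G.toArena.owner (ρ m)) l := by
        intro l
        rw [hu, Function.update_of_ne howner]
      have ht : G.toArena.δ (ρ m) (σ' (G.toArena.owner (ρ m)) (revList ρ m)) ≠ ρ (m + 1) := by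
        intro hh
        apply hNe
        rw [steps_succ, hstepm]
        dsimp only
        rw [hu_m, hh]
        rfl
      set t := G.toArena.δ (ρ m) (σ' (G.toArena.owner (ρ m)) (revList ρ m)) with htdef
      set tl := (revList ρ m).tail with htl
      have htlc : revList ρ m = ρ m :: tl := revList_cons ρ m
      have htllen : tl.length = m := by
        have := revList_length ρ m
        rw [htl]
        simp [List.length_tail, this]
      set τ : G.toArena.Profile := fun j sub => σ' j (sub ++ tl) with hτ
      set v := Function.update τ i (wst m i) with hv
      have hq1 : G.toArena.stepsFrom v (ρ m) 1 = (t, [t, ρ m]) := by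
        rw [steps_succ, steps_zero]
        dsimp only
        rw [hv, Function.update_of_ne howner, hτ]
        dsimp only
        rw [show ([ρ m] : List G.toArena.State) ++ tl = revList ρ m from htlc ▸ rfl]
      have hsubfact : ∀ k, 1 ≤ k → ([t, ρ m] : List G.toArena.State) <:+
          (G.toArena.stepsFrom v (ρ m) k).2 := by
        intro k hk
        have h1 : (G.toArena.stepsFrom v (ρ m) 1).2 = [t, ρ m] := by rw [hq1]
        exact h1 ▸ steps_snd_suffix G.toArena v (ρ m) hk
      have hnosuf : ∀ k, 1 ≤ k → ∀ k', m + 1 ≤ k' →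
          ¬ (revList ρ k' <:+ (G.toArena.stepsFrom v (ρ m) k).2 ++ tl) := by
        intro k hk k' hk' hsuf
        have h1 : revList ρ (m + 1) <:+ (G.toArena.stepsFrom v (ρ m) k).2 ++ tl :=
          (revList_suffix ρ hk').trans hsuf
        have h2 : ([t, ρ m] ++ tl) <:+ (G.toArena.stepsFrom v (ρ m) k).2 ++ tl := by
          obtain ⟨c, hc⟩ := hsubfact k hk
          exact ⟨c, by rw [← List.append_assoc, hc]⟩
        have heq := suffix_eq_of_length h1 h2 (by simp [revList_length, htllen])
        rw [show revList ρ (m + 1) = ρ (m + 1) :: revList ρ m from rfl, htlc] at heq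
        simp only [List.cons_append, List.cons.injEq] at heq
        exact ht heq.1.symm
      have hsig : ∀ k, 1 ≤ k → σ i ((G.toArena.stepsFrom v (ρ m) k).2 ++ tl)
          = wst m i (G.toArena.stepsFrom v (ρ m) k).2 := by
        intro k hk
        have hlen : (G.toArena.stepsFrom v (ρ m) k).2.length = k + 1 :=
          steps_snd_length G.toArena v (ρ m) k
        have hfl : ((G.toArena.stepsFrom v (ρ m) k).2 ++ tl).length = k + 1 + m := by
          simp [hlen, htllen]
        have hnotfull : (G.toArena.stepsFrom v (ρ m) k).2 ++ tl ≠
            revList ρ (((G.toArena.stepsFrom v (ρ m) k).2 ++ tl).length - 1) := by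
          intro hh
          exact hnosuf k hk (((G.toArena.stepsFrom v (ρ m) k).2 ++ tl).length - 1)
            (by omega) (hh ▸ List.suffix_refl _)
        have hPm : revList ρ m <:+ (G.toArena.stepsFrom v (ρ m) k).2 ++ tl := by
          have hsm : ([ρ m] : List G.toArena.State) <:+ (G.toArena.stepsFrom v (ρ m) k).2 := by
            have h0' : (G.toArena.stepsFrom v (ρ m) 0).2 = [ρ m] := rfl
            exact h0' ▸ steps_snd_suffix G.toArena v (ρ m) (Nat.zero_le k)
          obtain ⟨c, hc⟩ := hsm
          exact ⟨c, by rw [htlc, show (ρ m :: tl : List G.toArena.State) = [ρ m] ++ tl from rfl,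
            ← List.append_assoc, hc]⟩
        have hsplit : Nat.findGreatest (fun k' => revList ρ k' <:+
            (G.toArena.stepsFrom v (ρ m) k).2 ++ tl)
            ((G.toArena.stepsFrom v (ρ m) k).2 ++ tl).length = m := by
          rw [Nat.findGreatest_eq_iff]
          refine ⟨by omega, fun _ => hPm, ?_⟩
          intro n' hn' hn'' hP
          exact hnosuf k hk n' (by omega) hP
        rw [hσ]
        simp only [AuxStmt14.conSigma]
        rw [if_neg hnotfull, hsplit,
          show ((G.toArena.stepsFrom v (ρ m) k).2 ++ tl).length - m
            = (G.toArena.stepsFrom v (ρ m) k).2.length by omega,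
          List.take_left]
      have claimC : ∀ k, G.toArena.stepsFrom u G.toArena.init (m + k)
          = ((G.toArena.stepsFrom v (ρ m) k).1, (G.toArena.stepsFrom v (ρ m) k).2 ++ tl) := by
        intro k
        induction k with
        | zero =>
          rw [Nat.add_zero, hstepm, steps_zero]
          exact Prod.ext rfl (by rw [htlc]; rfl)
        | succ k ih =>
          have hstrat : u (G.toArena.owner (G.toArena.stepsFrom v (ρ m) k).1)
                ((G.toArena.stepsFrom v (ρ m) k).2 ++ tl)
              = v (G.toArena.owner (G.toArena.stepsFrom v (ρ m) k).1)
                (G.toArena.stepsFrom v (ρ m) k).2 := by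
            by_cases hxi : G.toArena.owner (G.toArena.stepsFrom v (ρ m) k).1 = i
            · have hk1 : 1 ≤ k := by
                rcases Nat.eq_zero_or_pos k with h0' | h0'
                · subst h0'; exact absurd hxi howner
                · omega
              rw [hxi, hu, Function.update_self, hv, Function.update_self]
              exact hsig k hk1
            · rw [hu, Function.update_of_ne hxi, hv, Function.update_of_ne hxi, hτ]
          rw [show m + (k + 1) = (m + k) + 1 from rfl, steps_succ, steps_succ, ih]
          dsimp only
          rw [hstrat, List.cons_append]
      have houtcome : G.toArena.outcomeFrom v (ρ m) = fun k => G.toArena.outcome u (m + k) :=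
        funext fun k => by
          show (G.toArena.stepsFrom v (ρ m) k).1
            = (G.toArena.stepsFrom u G.toArena.init (m + k)).1
          rw [claimC k]
      have hyp2 : ∀ j, j ≠ i →
          G.toArena.outcomeFrom (Function.update τ i (wst m i)) (ρ m) ∈ G.obj j := by
        intro j hj
        rw [← hv, houtcome]
        exact (prefixIndep_shift (hpi j) _ m).mp (hyp j hj)
      have hfin := hwst m i τ hyp2
      rw [← hv, houtcome] at hfin
      exact (prefixIndep_shift (hpi i) _ m).mpr hfin
end

section
/- If a strategy σ_i of player i is admissible and σ'_i agrees with σ_i on every history whose last state is reachable under σ_i from the initial state, then σ'_i is also admissible. -/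
open scoped Classical

lemma stepsFrom_head {ι : Type} (A : Arena ι) (σ : A.Profile) (s : A.State) (n : ℕ) :
    (A.stepsFrom σ s n).2.head? = some (A.stepsFrom σ s n).1 := by
  cases n <;> rfl

lemma stmt15_aux {ι : Type} [DecidableEq ι] (G : Game ι) (i : ι)
    (σi σi' : G.toArena.Strategy)
    (hagree : ∀ (h : List G.toArena.State) (s : G.toArena.State), h.head? = some s →
      (∃ (σ : G.toArena.Profile) (n : ℕ),
        G.toArena.outcome (Function.update σ i σi) n = s) →
      σi' h = σi h)
    (σ : G.toArena.Profile) (n : ℕ) :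
    G.toArena.stepsFrom (Function.update σ i σi') G.toArena.init n
      = G.toArena.stepsFrom (Function.update σ i σi) G.toArena.init n := by
  induction n with
  | zero => rfl
  | succ n ih =>
    simp only [Arena.stepsFrom, ih]
    set p := G.toArena.stepsFrom (Function.update σ i σi) G.toArena.init n with hp
    have hact : (Function.update σ i σi') (G.toArena.owner p.1) p.2
        = (Function.update σ i σi) (G.toArena.owner p.1) p.2 := by
      by_cases h : G.toArena.owner p.1 = i
      · rw [h, Function.update_self, Function.update_self]
        exact hagree p.2 p.1 (stepsFrom_head _ _ _ _) ⟨σ, n, rfl⟩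
      · rw [Function.update_of_ne h, Function.update_of_ne h]
    rw [hact]

lemma stmt15_outcome {ι : Type} [DecidableEq ι] (G : Game ι) (i : ι)
    (σi σi' : G.toArena.Strategy)
    (hagree : ∀ (h : List G.toArena.State) (s : G.toArena.State), h.head? = some s →
      (∃ (σ : G.toArena.Profile) (n : ℕ),
        G.toArena.outcome (Function.update σ i σi) n = s) →
      σi' h = σi h)
    (σ : G.toArena.Profile) :
    G.toArena.outcome (Function.update σ i σi')
      = G.toArena.outcome (Function.update σ i σi) := by
  funext n
  simp only [Arena.outcome, Arena.outcomeFrom, stmt15_aux G i σi σi' hagree σ n]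

/-- modifying an admissible strategy only at histories whose last state
is unreachable under it preserves admissibility. -/
theorem stmt15 {ι : Type} [DecidableEq ι] (G : Game ι) (i : ι)
    (σi σi' : G.toArena.Strategy) (hadm : G.Admissible i σi)
    (hagree : ∀ (h : List G.toArena.State) (s : G.toArena.State), h.head? = some s →
      (∃ (σ : G.toArena.Profile) (n : ℕ),
        G.toArena.outcome (Function.update σ i σi) n = s) →
      σi' h = σi h) :
    G.Admissible i σi' := by
  intro ⟨τ, hdom1, hdom2⟩
  exact hadm ⟨τ, fun σ h => hdom1 σ (by rwa [stmt15_outcome G i σi σi' hagree σ]),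
    hdom2.imp fun σ ⟨h1, h2⟩ => ⟨h1, by rwa [stmt15_outcome G i σi σi' hagree σ] at h2⟩⟩
end

section
/- In the abstract game construction: if a coalition C has a winning strategy for a Muller objective φ_k in the concrete game G from state s, then C has a winning strategy for the abstract objective φ_k^a in the abstract game A^C from α(s), where nondeterminism of the abstract transition relation is resolved by C. -/
open scoped Classical

/-- An abstraction of the game `G`: a partition of the state space compatible with
the ownership of states. `abs` maps each concrete state to its (unique) abstract
state, `γ` is the concretization function, and `aowner` assigns abstract states to
players. -/
structure Abstraction {ι : Type} (G : Game ι) where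
  AState : Type
  γ : AState → Set G.toArena.State
  abs : G.toArena.State → AState
  aowner : AState → ι
  mem_iff : ∀ (s : G.toArena.State) (t : AState), s ∈ γ t ↔ abs s = t
  owner_compat : ∀ s : G.toArena.State, aowner (abs s) = G.toArena.owner s

namespace Abstraction

variable {ι : Type} {G : Game ι} (A : Abstraction G)

/-- The abstract transition relation induced by the abstraction. -/
def Delta (u : A.AState) (a : G.toArena.Act) (v : A.AState) : Prop :=
  ∃ s ∈ A.γ u, A.abs (G.toArena.δ s a) = v

/-- The abstract play from `u` determined by an action selector `act` and a
nondeterminism resolver `res` (current state first in histories). -/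
def absRun (act : List A.AState → G.toArena.Act)
    (res : List A.AState → G.toArena.Act → A.AState) (u : A.AState) :
    ℕ → A.AState × List A.AState
  | 0 => (u, [u])
  | n + 1 =>
    let p := absRun act res u n
    let v := res p.2 (act p.2)
    (v, v :: p.2)

/-- Combine the action selectors of the coalition `C` and of its opponents according
to the owner of the current abstract state. -/
noncomputable def combine (C : Set ι) (actC actO : List A.AState → G.toArena.Act) :
    List A.AState → G.toArena.Act := fun h =>
  match h.head? with
  | some u => if A.aowner u ∈ C then actC h else actO h
  | none => actC h

/-- A resolver is valid when it always chooses a `Delta`-successor. -/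
def ValidRes (res : List A.AState → G.toArena.Act → A.AState) : Prop :=
  ∀ (h : List A.AState) (u : A.AState) (a : G.toArena.Act),
    h.head? = some u → A.Delta u a (res h a)

/-- In the abstract game `A^C` (where the coalition `C` both plays at its own states
and resolves the nondeterminism), the coalition `C` can win objective `φ` from `u`. -/
def WinAbsC (C : Set ι) (u : A.AState) (φ : Set (ℕ → A.AState)) : Prop :=
  ∃ (actC : List A.AState → G.toArena.Act)
    (res : List A.AState → G.toArena.Act → A.AState), A.ValidRes res ∧
    ∀ actO : List A.AState → G.toArena.Act,
      (fun n => (A.absRun (A.combine C actC actO) res u n).1) ∈ φ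

/-- In the abstract game `A^C` (where the coalition `C` resolves the nondeterminism),
the opposing coalition `-C` can win objective `φ` from `u`. -/
def WinAbsOpp (C : Set ι) (u : A.AState) (φ : Set (ℕ → A.AState)) : Prop :=
  ∃ actO : List A.AState → G.toArena.Act,
    ∀ (actC : List A.AState → G.toArena.Act)
      (res : List A.AState → G.toArena.Act → A.AState), A.ValidRes res →
      (fun n => (A.absRun (A.combine C actC actO) res u n).1) ∈ φ

/-- The abstract Muller objective of player `k` induced by the Muller family `F`. -/
def absObj (F : ι → Set (Set G.toArena.State)) (k : ι) : Set (ℕ → A.AState) :=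
  {ρa | infSet ρa ∈ {T | ∃ S ∈ F k, A.abs '' S = T}}

end Abstraction

section StmtAux

variable {ι : Type} {G : Game ι} (A : Abstraction G)
  (hcells : ∀ u : A.AState, (A.γ u).Nonempty)
  (C : Set ι) (σC : ι → G.toArena.Strategy) (s : G.toArena.State)

/-- Reconstruct a concrete history from an abstract history. -/
noncomputable def cst : List A.AState → List G.toArena.State
  | [] => []
  | u :: h =>
    match (cst h).head? with
    | none => [if A.abs s = u then s else (hcells u).choose]
    | some c =>
      if A.aowner (A.abs c) ∈ C ∧
          A.abs (G.toArena.δ c (σC (G.toArena.owner c) (cst h))) = u then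
        G.toArena.δ c (σC (G.toArena.owner c) (cst h)) :: cst h
      else if ha : ∃ a, A.abs (G.toArena.δ c a) = u then
        G.toArena.δ c ha.choose :: cst h
      else (hcells u).choose :: cst h

lemma cst_map : ∀ h : List A.AState, (cst A hcells C σC s h).map A.abs = h := by
  intro h
  induction h with
  | nil => simp [cst]
  | cons u h ih =>
    cases hch : (cst A hcells C σC s h).head? with
    | none =>
      have h0 : cst A hcells C σC s h = [] := List.head?_eq_none_iff.mp hch
      have hh : h = [] := by rw [← ih, h0]; rfl
      subst hh
      simp only [cst, h0, List.head?_nil, List.map_cons, List.map_nil,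
        List.cons.injEq, and_true]
      by_cases habs : A.abs s = u
      · simp [habs]
      · simp only [if_neg habs]
        exact (A.mem_iff _ _).mp (hcells u).choose_spec
    | some c =>
      simp only [cst, hch]
      split_ifs with h1 h2
      · simp only [List.map_cons, ih, List.cons.injEq, and_true]
        exact h1.2
      · simp only [List.map_cons, ih, List.cons.injEq, and_true]
        exact h2.choose_spec
      · simp only [List.map_cons, ih, List.cons.injEq, and_true]
        exact (A.mem_iff _ _).mp (hcells u).choose_spec

/-- The coalition's abstract action selector. -/
noncomputable def actCdef (d : G.toArena.Act) :
    List A.AState → G.toArena.Act := fun h =>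
  match (cst A hcells C σC s h).head? with
  | some c => σC (G.toArena.owner c) (cst A hcells C σC s h)
  | none => d

/-- The coalition's nondeterminism resolver. -/
noncomputable def resdef : List A.AState → G.toArena.Act → A.AState := fun h a =>
  match (cst A hcells C σC s h).head? with
  | some c => A.abs (G.toArena.δ c a)
  | none => A.abs s

/-- The simulated concrete strategy of the opponents. -/
noncomputable def sOdef (Ab : List A.AState → G.toArena.Act) (d : G.toArena.Act) :
    List G.toArena.State → G.toArena.Act := fun ch =>
  match ch.head? with
  | some c =>
      (⟨Ab (ch.map A.abs), rfl⟩ :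
        ∃ a, A.abs (G.toArena.δ c a) = A.abs (G.toArena.δ c (Ab (ch.map A.abs)))).choose
  | none => d

end StmtAux

lemma absRun_snd_head {ι : Type} {G : Game ι} (A : Abstraction G)
    (act : List A.AState → G.toArena.Act)
    (res : List A.AState → G.toArena.Act → A.AState) (u : A.AState) (n : ℕ) :
    ((A.absRun act res u n).2).head? = some (A.absRun act res u n).1 := by
  cases n <;> rfl

lemma stepsFrom_snd_head {ι : Type} (Ar : Arena ι) (σ : Ar.Profile) (s : Ar.State)
    (n : ℕ) : ((Ar.stepsFrom σ s n).2).head? = some (Ar.stepsFrom σ s n).1 := by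
  cases n <;> rfl

lemma infSet_unbounded {S : Type} {ρ : ℕ → S} {t : S} (ht : t ∈ infSet ρ) :
    {n | ρ n = t}.Infinite := by
  rw [Set.infinite_coe_iff.symm, Set.infinite_coe_iff]
  intro hfin
  obtain ⟨N, hN⟩ := hfin.bddAbove
  obtain ⟨n, hn, hρ⟩ := ht (N + 1)
  exact absurd (hN hρ) (by omega)

lemma infSet_comp {S T : Type} [Finite S] (f : S → T) (ρ : ℕ → S) :
    infSet (fun n => f (ρ n)) = f '' infSet ρ := by
  ext u
  constructor
  · intro hu
    by_contra hcon
    have hcon' : ∀ t, f t = u → ∃ N, ∀ n, N ≤ n → ρ n ≠ t := by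
      intro t hft
      by_contra hT
      push_neg at hT
      exact hcon ⟨t, fun N => by obtain ⟨n, hn, h⟩ := hT N; exact ⟨n, hn, h⟩, hft⟩
    have : Nonempty S := ⟨ρ 0⟩
    set Nf : S → ℕ := fun t =>
      if h : f t = u then (hcon' t h).choose else 0 with hNf
    obtain ⟨t0, ht0⟩ := Finite.exists_max Nf
    obtain ⟨n, hn, hfn⟩ := hu (Nf t0)
    have h1 : Nf (ρ n) = (hcon' (ρ n) hfn).choose := by
      rw [hNf]; simp only [dif_pos hfn]
    exact (hcon' (ρ n) hfn).choose_spec n (le_trans (h1 ▸ ht0 (ρ n)) hn) rfl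
  · rintro ⟨t, ht, rfl⟩ N
    obtain ⟨n, hn, h⟩ := ht N
    exact ⟨n, hn, by simp [h]⟩

/-- if a coalition `C` wins a Muller objective in the concrete game
from `s`, then it wins the abstract objective in the abstract game `A^C` (where `C`
resolves the nondeterminism) from `abs s`. -/
theorem stmt16 {ι : Type} (G : Game ι) [Finite G.toArena.State]
    (A : Abstraction G) (hcells : ∀ u : A.AState, (A.γ u).Nonempty)
    (F : ι → Set (Set G.toArena.State)) (k : ι)
    (hobj : G.obj k = {ρ | infSet ρ ∈ F k})
    (hcompat : ∀ S S' : Set G.toArena.State,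
      A.abs '' S = A.abs '' S' → (S ∈ F k ↔ S' ∈ F k))
    (C : Set ι) (s : G.toArena.State)
    (hwin : ∃ σC : ι → G.toArena.Strategy, ∀ σ : G.toArena.Profile,
      (∀ i ∈ C, σ i = σC i) → G.toArena.outcomeFrom σ s ∈ G.obj k) :
    A.WinAbsC C (A.abs s) (A.absObj F k) := by
  obtain ⟨σC, hσC⟩ := hwin
  set d : G.toArena.Act := σC k [] with hd
  refine ⟨actCdef A hcells C σC s d, resdef A hcells C σC s, ?_, ?_⟩
  · -- the resolver is valid
    intro h u a hh
    have hm := cst_map A hcells C σC s h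
    have hh' : ((cst A hcells C σC s h).map A.abs).head? = some u := by rw [hm, hh]
    rw [List.head?_map] at hh'
    obtain ⟨c, hc, hcu⟩ := Option.map_eq_some_iff.mp hh'
    refine ⟨c, (A.mem_iff _ _).mpr hcu, ?_⟩
    simp [resdef, hc]
  · intro actO
    set Ab := A.combine C (actCdef A hcells C σC s d) actO with hAbdef
    set σO := sOdef A Ab d with hσOdef
    set σ : G.toArena.Profile := fun i => if i ∈ C then σC i else σO with hσdef
    have key : ∀ n,
        cst A hcells C σC s ((A.absRun Ab (resdef A hcells C σC s) (A.abs s) n).2)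
          = (G.toArena.stepsFrom σ s n).2 := by
      intro n
      induction n with
      | zero => simp [Abstraction.absRun, Arena.stepsFrom, cst]
      | succ n ih =>
        have hchead := stepsFrom_snd_head G.toArena σ s n
        set hn := (A.absRun Ab (resdef A hcells C σC s) (A.abs s) n).2 with hhn
        set ch := (G.toArena.stepsFrom σ s n).2 with hch
        set c := (G.toArena.stepsFrom σ s n).1 with hcdef
        have hm : ch.map A.abs = hn := by rw [← ih]; exact cst_map A hcells C σC s hn
        have hnhead' : hn.head? = some (A.abs c) := by
          rw [← hm, List.head?_map, hchead]; rfl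
        show cst A hcells C σC s
            (resdef A hcells C σC s hn (Ab hn) :: hn)
            = G.toArena.δ c (σ (G.toArena.owner c) ch) :: ch
        have hv : resdef A hcells C σC s hn (Ab hn)
            = A.abs (G.toArena.δ c (Ab hn)) := by
          simp [resdef, ih, hchead]
        by_cases hco : A.aowner (A.abs c) ∈ C
        · -- coalition-owned state
          have hab : Ab hn = σC (G.toArena.owner c) ch := by
            rw [hAbdef]
            simp [Abstraction.combine, hnhead', hco, actCdef, ih, hchead]
          have howner : G.toArena.owner c ∈ C := by rw [← A.owner_compat]; exact hco
          have hσc : σ (G.toArena.owner c) = σC (G.toArena.owner c) := by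
            rw [hσdef]; simp [howner]
          rw [hv, hab, hσc]
          simp only [cst, ih, hchead]
          simp [hco]
        · -- opponent-owned state
          have howner : G.toArena.owner c ∉ C := by rw [← A.owner_compat]; exact hco
          have hσo : σ (G.toArena.owner c) = σO := by
            rw [hσdef]; simp [howner]
          have hσval : σO ch
              = (⟨Ab hn, rfl⟩ :
                  ∃ a, A.abs (G.toArena.δ c a) = A.abs (G.toArena.δ c (Ab hn))).choose := by
            rw [hσOdef]
            simp only [sOdef, hchead, hm]
          rw [hv, hσo, hσval]
          simp only [cst, ih, hchead]
          rw [if_neg (fun hcon => hco hcon.1),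
            dif_pos (⟨Ab hn, rfl⟩ :
              ∃ a, A.abs (G.toArena.δ c a) = A.abs (G.toArena.δ c (Ab hn)))]
    have hstate : ∀ n, (A.absRun Ab (resdef A hcells C σC s) (A.abs s) n).1
        = A.abs ((G.toArena.stepsFrom σ s n).1) := by
      intro n
      have h1 := absRun_snd_head A Ab (resdef A hcells C σC s) (A.abs s) n
      have h2 := stepsFrom_snd_head G.toArena σ s n
      have hm : (G.toArena.stepsFrom σ s n).2.map A.abs
          = (A.absRun Ab (resdef A hcells C σC s) (A.abs s) n).2 := by
        rw [← key n]; exact cst_map A hcells C σC s _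
      rw [← hm, List.head?_map, h2] at h1
      exact (Option.some.inj h1).symm
    have hρ : G.toArena.outcomeFrom σ s ∈ G.obj k := by
      refine hσC σ (fun i hi => ?_)
      rw [hσdef]; simp [hi]
    rw [hobj] at hρ
    have heq : (fun n => (A.absRun Ab (resdef A hcells C σC s) (A.abs s) n).1)
        = fun n => A.abs (G.toArena.outcomeFrom σ s n) := funext hstate
    show infSet _ ∈ {T | ∃ S ∈ F k, A.abs '' S = T}
    exact ⟨infSet (G.toArena.outcomeFrom σ s), hρ,
      by rw [heq]; exact (infSet_comp A.abs _).symm⟩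
end
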